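/- arXiv:1806.05712 — 5 statements merged into one kernel-verified Lean document; each statement's English description precedes it below -/
import Mathlib

section
/- Let q = 5^k for a positive integer k and F = GF(q^3). Then the map x ↦ x^(q^2-q+1) + 2·x^(q^3-q^2+q) + 3·x is a bijection of F. -/
private lemma coreAB {F : Type*} [Field F] (x u v y0 y1 y2 : F) (h5 : (5:F) = 0)
    (h0 : y0*(x*u*v) = x^2*(u+v)*(v+2*u))
    (h1 : y1*(x*u*v) = u^2*(v+x)*(x+2*v))
    (h2 : y2*(x*u*v) = v^2*(x+u)*(u+2*x)) :
    (4*y0^0*y1^0*y2^4 + 2*y0^0*y1^1*y2^3 + 1*y0^0*y1^2*y2^2 + 3*y0^0*y1^3*y2^1 + 4*y0^0*y1^4*y2^0 + 4*y0^1*y1^0*y2^3 + 2*y0^1*y1^2*y2^1 + 1*y0^1*y1^3*y2^0 + 4*y0^2*y1^1*y2^1 + 4*y0^3*y1^0*y2^1 + 1*y0^3*y1^1*y2^0 + 1*y0^4*y1^0*y2^0) * (x*u*v)^4 = x * (1*y0^0*y1^0*y2^3 + 3*y0^0*y1^1*y2^2 + 1*y0^0*y1^3*y2^0 + 4*y0^1*y1^1*y2^1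 + 3*y0^1*y1^2*y2^0 + 3*y0^2*y1^0*y2^1 + 1*y0^3*y1^0*y2^0) * (x*u*v)^4 := by
  linear_combination ((x^6*v^6 + 8*x^6*u*v^5 + 27*x^6*u^2*v^4 + 50*x^6*u^3*v^3 + 54*x^6*u^4*v^2 + 32*x^6*u^5*v + 8*x^6*u^6 + 4*y2*x^5*u*v^5 + 21*y2*x^5*u^2*v^4 + 43*y2*x^5*u^3*v^3 + 42*y2*x^5*u^4*v^2 + 16*y2*x^5*u^5*v + 4*y2^3*x^3*u^3*v^3 + y1*x^5*u*v^5 + 6*y1*x^5*u^2*v^4 + 13*y1*x^5*u^3*v^3 + 12*y1*x^5*u^4*v^2 + 4*y1*x^5*u^5*v + 4*y1*y2*x^4*u^2*v^4 + 8*y1*y2*x^4*u^3*v^3 + 8*y1*y2*x^4*u^4*v^2 + (-3)*y1^2*x^4*u^3*v^3 + 2*y1^2*y2*x^3*u^3*v^3 + y1^3*x^3*u^3*v^3 + y0*x^5*u*v^5 + 5*y0*x^5*u^2*v^4 + 10*y0*x^5*u^3*v^3 + 10*y0*x^5*u^4*v^2 + 4*y0*x^5*u^5*v + 4*y0*y2*x^4*u^2*v^4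 + 9*y0*y2*x^4*u^3*v^3 + 8*y0*y2*x^4*u^4*v^2 + y0*y1*x^4*u^2*v^4 + 3*y0*y1*x^4*u^3*v^3 + 2*y0*y1*x^4*u^4*v^2 + 4*y0*y1*y2*x^3*u^3*v^3 + y0^2*x^4*u^2*v^4 + 2*y0^2*x^4*u^3*v^3 + 2*y0^2*x^4*u^4*v^2 + 4*y0^2*y2*x^3*u^3*v^3 + y0^2*y1*x^3*u^3*v^3 + y0^3*x^3*u^3*v^3)) * h0 + ((32*u^6*v^6 + 144*x*u^6*v^5 + 4*x^2*u^4*v^6 + 8*x^2*u^5*v^5 + 272*x^2*u^6*v^4 + 12*x^3*u^4*v^5 + 24*x^3*u^5*v^4 + 276*x^3*u^6*v^3 + (-6)*x^4*u^3*v^5 + (-5)*x^4*u^4*v^4 + 14*x^4*u^5*v^3 + 158*x^4*u^6*v^2 + (-9)*x^5*u^3*v^4 + (-21)*x^5*u^4*v^3 + (-6)*x^5*u^5*v^2 + 48*x^5*u^6*v + x^6*v^6 + 9*x^6*u*v^5 + 33*x^6*u^2*v^4 + 60*x^6*u^3*v^3 + 58*x^6*u^4*v^2 + 32*x^6*u^5*v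 + 14*x^6*u^6 + 12*y2*x*u^5*v^5 + 36*y2*x^2*u^5*v^4 + 4*y2*x^3*u^3*v^5 + 12*y2*x^3*u^4*v^4 + 47*y2*x^3*u^5*v^3 + 6*y2*x^4*u^3*v^4 + 18*y2*x^4*u^4*v^3 + 30*y2*x^4*u^5*v^2 + 4*y2*x^5*u*v^5 + 20*y2*x^5*u^2*v^4 + 42*y2*x^5*u^3*v^3 + 46*y2*x^5*u^4*v^2 + 23*y2*x^5*u^5*v + 2*y2^2*x^2*u^4*v^4 + 3*y2^2*x^3*u^4*v^3 + (-3)*y2^2*x^4*u^3*v^3 + y2^2*x^4*u^4*v^2 + 2*y2^3*x^3*u^3*v^3 + 16*y1*x*u^5*v^5 + 48*y1*x^2*u^5*v^4 + 2*y1*x^3*u^3*v^5 + 4*y1*x^3*u^4*v^4 + 56*y1*x^3*u^5*v^3 + 3*y1*x^4*u^3*v^4 + 6*y1*x^4*u^4*v^3 + 30*y1*x^4*u^5*v^2 + (-3)*y1*x^5*u^2*v^4 + (-8)*y1*x^5*u^3*v^3 + (-4)*y1*x^5*u^4*v^2 + 6*y1*x^5*u^5*v + 6*y1*y2*x^2*u^4*v^4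 + 9*y1*y2*x^3*u^4*v^3 + 2*y1*y2*x^4*u^2*v^4 + 6*y1*y2*x^4*u^3*v^3 + 7*y1*y2*x^4*u^4*v^2 + y1*y2^2*x^3*u^3*v^3 + 8*y1^2*x^2*u^4*v^4 + 12*y1^2*x^3*u^4*v^3 + y1^2*x^4*u^2*v^4 + 2*y1^2*x^4*u^3*v^3 + 6*y1^2*x^4*u^4*v^2 + 3*y1^2*y2*x^3*u^3*v^3 + 4*y1^3*x^3*u^3*v^3)) * h1 + ((36*u^6*v^6 + 72*x*u^5*v^6 + 126*x*u^6*v^5 + 204*x^2*u^4*v^6 + 101*x^2*u^5*v^5 + 237*x^2*u^6*v^4 + 324*x^3*u^3*v^6 + 174*x^3*u^4*v^5 + 162*x^3*u^5*v^4 + 243*x^3*u^6*v^3 + 340*x^4*u^2*v^6 + 243*x^4*u^3*v^5 + 235*x^4*u^4*v^4 + 173*x^4*u^5*v^3 + 184*x^4*u^6*v^2 + 192*x^5*u*v^6 + 168*x^5*u^2*v^5 + 162*x^5*u^3*v^4 + 135*x^5*u^4*v^3 + 159*x^5*u^5*v^2 + 99*x^5*u^6*v + 52*x^6*v^6 + 77*x^6*u*v^5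 + 158*x^6*u^2*v^4 + 227*x^6*u^3*v^3 + 272*x^6*u^4*v^2 + 178*x^6*u^5*v + 55*x^6*u^6 + 12*y2*x*u^5*v^5 + 36*y2*x^2*u^4*v^5 + 18*y2*x^2*u^5*v^4 + 64*y2*x^3*u^3*v^5 + 23*y2*x^3*u^4*v^4 + 23*y2*x^3*u^5*v^3 + 60*y2*x^4*u^2*v^5 + 45*y2*x^4*u^3*v^4 + 21*y2*x^4*u^4*v^3 + 6*y2*x^4*u^5*v^2 + 24*y2*x^5*u*v^5 + 22*y2*x^5*u^2*v^4 + 20*y2*x^5*u^3*v^3 + (-3)*y2*x^5*u^4*v^2 + y2*x^5*u^5*v + 8*y2^2*x^2*u^4*v^4 + 12*y2^2*x^3*u^3*v^4 + 6*y2^2*x^3*u^4*v^3 + 12*y2^2*x^4*u^2*v^4 + 11*y2^2*x^4*u^3*v^3 + 10*y2^2*x^4*u^4*v^2 + 4*y2^3*x^3*u^3*v^3)) * h2 + ((20*u^8*v^8 + 36*x*u^7*v^8 + 102*x*u^8*v^7 + 100*x^2*u^6*v^8 + 99*x^2*u^7*v^7 + 249*x^2*u^8*v^6 + 216*x^3*u^5*v^8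 + 153*x^3*u^6*v^7 + 189*x^3*u^7*v^6 + 351*x^3*u^8*v^5 + 344*x^4*u^4*v^8 + 191*x^4*u^5*v^7 + 245*x^4*u^6*v^6 + 202*x^4*u^7*v^5 + 320*x^4*u^8*v^4 + 372*x^5*u^3*v^8 + 249*x^5*u^4*v^7 + 231*x^5*u^5*v^6 + 219*x^5*u^6*v^5 + 153*x^5*u^7*v^4 + 189*x^5*u^8*v^3 + 262*x^6*u^2*v^8 + 217*x^6*u^3*v^7 + 236*x^6*u^4*v^6 + 213*x^6*u^5*v^5 + 233*x^6*u^6*v^4 + 107*x^6*u^7*v^3 + 77*x^6*u^8*v^2 + 108*x^7*u*v^8 + 114*x^7*u^2*v^7 + 165*x^7*u^3*v^6 + 210*x^7*u^4*v^5 + 261*x^7*u^5*v^4 + 177*x^7*u^6*v^3 + 51*x^7*u^7*v^2 + 18*x^7*u^8*v + 21*x^8*v^8 + 33*x^8*u*v^7 + 74*x^8*u^2*v^6 + 122*x^8*u^3*v^5 + 167*x^8*u^4*v^4 + 142*x^8*u^5*v^3 + 76*x^8*u^6*v^2 + 24*x^8*u^7*v + 6*x^8*u^8)) * h5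

private lemma coreC {F : Type*} [Field F] (x u v y0 y1 y2 : F) (h5 : (5:F) = 0)
    (h0 : y0*(x*u*v) = x^2*(u+v)*(v+2*u))
    (h1 : y1*(x*u*v) = u^2*(v+x)*(x+2*v))
    (h2 : y2*(x*u*v) = v^2*(x+u)*(u+2*x)) :
    (1*y0^0*y1^0*y2^3 + 3*y0^0*y1^1*y2^2 + 1*y0^0*y1^3*y2^0 + 4*y0^1*y1^1*y2^1 + 3*y0^1*y1^2*y2^0 + 3*y0^2*y1^0*y2^1 + 1*y0^3*y1^0*y2^0) * (x*u*v)^3 = 4*(x*u*v*(u+3*v)*(x+2*v)*(x+3*u))^2 := by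
  linear_combination ((x^4*v^4 + 6*x^4*u*v^3 + 13*x^4*u^2*v^2 + 12*x^4*u^3*v + 4*x^4*u^4 + 3*y2*x^3*u*v^3 + 9*y2*x^3*u^2*v^2 + 6*y2*x^3*u^3*v + 4*y1*y2*x^2*u^2*v^2 + 3*y1^2*x^2*u^2*v^2 + y0*x^3*u*v^3 + 3*y0*x^3*u^2*v^2 + 2*y0*x^3*u^3*v + 3*y0*y2*x^2*u^2*v^2 + y0^2*x^2*u^2*v^2)) * h0 + ((4*u^4*v^4 + 12*x*u^4*v^3 + 6*x^2*u^2*v^4 + 18*x^2*u^3*v^3 + 25*x^2*u^4*v^2 + 9*x^3*u^2*v^3 + 27*x^3*u^3*v^2 + 24*x^3*u^4*v + 3*x^4*u^2*v^2 + 9*x^4*u^3*v + 7*x^4*u^4 + 4*y2*x^3*u*v^3 + 12*y2*x^3*u^2*v^2 + 8*y2*x^3*u^3*v + 3*y2^2*x^2*u^2*v^2 + 2*y1*x*u^3*v^3 + 3*y1*x^2*u^3*v^2 + 3*y1*x^3*u*v^3 + 9*y1*x^3*u^2*v^2 + 7*y1*x^3*u^3*v + y1^2*x^2*u^2*v^2))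 * h1 + ((7*u^4*v^4 + 24*x*u^3*v^4 + 9*x*u^4*v^3 + 33*x^2*u^2*v^4 + 51*x^2*u^3*v^3 + 19*x^2*u^4*v^2 + 12*x^3*u*v^4 + 30*x^3*u^2*v^3 + 45*x^3*u^3*v^2 + 24*x^3*u^4*v + 7*x^4*v^4 + 18*x^4*u*v^3 + 49*x^4*u^2*v^2 + 48*x^4*u^3*v + 20*x^4*u^4 + 7*y2*x*u^3*v^3 + 3*y2*x^2*u^2*v^3 + 9*y2*x^2*u^3*v^2 + 2*y2*x^3*u*v^3 + 3*y2*x^3*u^3*v + y2^2*x^2*u^2*v^2)) * h2 + ((3*u^6*v^6 + 9*x*u^5*v^6 + 9*x*u^6*v^5 + (-233)*x^2*u^4*v^6 + (-150)*x^2*u^5*v^5 + (-7)*x^2*u^6*v^4 + (-141)*x^3*u^3*v^6 + (-327)*x^3*u^4*v^5 + (-150)*x^3*u^5*v^4 + 3*x^3*u^6*v^3 + (-7)*x^4*u^2*v^6 + (-150)*x^4*u^3*v^5 + (-131)*x^4*u^4*v^4 + (-15)*x^4*u^5*v^3 + 19*x^4*u^6*v^2 + 9*x^5*u*v^6 + (-6)*x^5*u^2*v^5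 + (-15)*x^5*u^3*v^4 + 10*x^5*u^4*v^3 + 18*x^5*u^5*v^2 + 9*x^5*u^6*v + 3*x^6*v^6 + 9*x^6*u*v^5 + 19*x^6*u^2*v^4 + 27*x^6*u^3*v^3 + 21*x^6*u^4*v^2 + 9*x^6*u^5*v + 3*x^6*u^6)) * h5

theorem stmt_4 (k : ℕ) (hk : 0 < k) (q : ℕ) (hq : q = 5 ^ k)
    (F : Type*) [Field F] [Fintype F] (hF : Fintype.card F = q ^ 3) :
    Function.Bijective
      (fun x : F => x ^ (q ^ 2 - q + 1) + 2 * x ^ (q ^ 3 - q ^ 2 + q) + 3 * x) := by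
  have hq5 : 5 ≤ q := by
    rw [hq]
    calc 5 = 5 ^ 1 := by norm_num
    _ ≤ 5 ^ k := Nat.pow_le_pow_right (by norm_num) hk
  have hq1 : 1 ≤ q := by omega
  have hqq : q * q = q ^ 2 := by ring
  have hqqq : q ^ 2 * q = q ^ 3 := by ring
  have hq2 : q ≤ q ^ 2 := by nlinarith
  have hq23 : q ^ 2 ≤ q ^ 3 := by nlinarith
  have hq31 : 1 ≤ q ^ 3 := by omega
  -- characteristic 5
  haveI hCF : CharP F (ringChar F) := ringChar.charP F
  obtain ⟨n, hp, hcard⟩ := FiniteField.card F (ringChar F)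
  have h2c : ringChar F ^ (n : ℕ) = 5 ^ (k * 3) := by
    rw [← hcard, hF, hq, ← pow_mul]
  have hr5 : ringChar F = 5 := by
    have h1 : ringChar F ∣ 5 ^ (k * 3) := by
      rw [← h2c]; exact dvd_pow_self _ n.pos.ne'
    exact (Nat.prime_dvd_prime_iff_eq hp (by norm_num)).mp (hp.dvd_of_dvd_pow h1)
  haveI hC5 : CharP F 5 := hr5 ▸ hCF
  have h5 : (5:F) = 0 := by exact_mod_cast CharP.cast_eq_zero F 5
  have h2ne : (2:F) ≠ 0 := by
    intro h
    have h' : ((2:ℕ):F) = 0 := by exact_mod_cast h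
    rw [CharP.cast_eq_zero_iff F 5 2] at h'
    norm_num at h'
  have h3ne : (3:F) ≠ 0 := by
    intro h
    have h' : ((3:ℕ):F) = 0 := by exact_mod_cast h
    rw [CharP.cast_eq_zero_iff F 5 3] at h'
    norm_num at h'
  have h4ne : (4:F) ≠ 0 := by
    intro h
    have h' : ((4:ℕ):F) = 0 := by exact_mod_cast h
    rw [CharP.cast_eq_zero_iff F 5 4] at h'
    norm_num at h'
  have pcard : ∀ z : F, z ^ (q ^ 3) = z := by
    intro z; rw [← hF]; exact FiniteField.pow_card z
  have punit : ∀ z : F, z ≠ 0 → z ^ (q ^ 3 - 1) = 1 := by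
    intro z hz
    have h' : z ^ (q ^ 3 - 1) * z = 1 * z := by
      rw [one_mul, ← pow_succ, Nat.sub_add_cancel hq31]
      exact pcard z
    exact mul_right_cancel₀ hz h'
  have hm3 : ∃ m, q ^ 2 + q + 1 = 4 * m + 3 := by
    have e1 : q % 4 = 1 := by rw [hq, Nat.pow_mod]; norm_num
    have e2 : q ^ 2 % 4 = 1 := by rw [← hqq, Nat.mul_mod, e1]
    exact ⟨(q ^ 2 + q + 1) / 4, by omega⟩
  have noeq : ∀ w c : F, w ^ (q ^ 2 + q + 1) = 1 → c ^ 4 = 1 → c ^ 3 ≠ 1 → w ≠ c := by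
    intro w c hw h4 h3 heq
    have hw' : c ^ (q ^ 2 + q + 1) = 1 := heq ▸ hw
    obtain ⟨m, hm⟩ := hm3
    apply h3
    calc c ^ 3 = (c ^ 4) ^ m * c ^ 3 := by rw [h4, one_pow, one_mul]
    _ = c ^ (4 * m + 3) := by rw [← pow_mul, ← pow_add]
    _ = 1 := by rw [← hm]; exact hw'
  have h42 : (2:F) ^ 4 = 1 := by linear_combination 3 * h5
  have h43 : (3:F) ^ 4 = 1 := by linear_combination 16 * h5
  have h44 : (4:F) ^ 4 = 1 := by linear_combination 51 * h5
  have h32 : (2:F) ^ 3 ≠ 1 := by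
    intro h; exact h2ne (by linear_combination h - h5)
  have h33 : (3:F) ^ 3 ≠ 1 := by
    intro h; exact one_ne_zero (α := F) (by linear_combination h - 5 * h5)
  have h34 : (4:F) ^ 3 ≠ 1 := by
    intro h; exact h3ne (by linear_combination h - 12 * h5)
  -- the key factorization identity
  have key : ∀ x : F,
      (x ^ (q ^ 2 - q + 1) + 2 * x ^ (q ^ 3 - q ^ 2 + q) + 3 * x) * (x * x ^ q * x ^ (q ^ 2))
        = x ^ 2 * (x ^ q + x ^ (q ^ 2)) * (x ^ (q ^ 2) + 2 * x ^ q) := by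
    intro x
    have pe1 : x ^ (q ^ 2 - q + 1) * x ^ q = x ^ (q ^ 2) * x := by
      rw [← pow_add, ← pow_succ]; congr 1; omega
    have pe2 : x ^ (q ^ 3 - q ^ 2 + q) * x ^ (q ^ 2) = x * x ^ q := by
      have e : x ^ (q ^ 3 - q ^ 2 + q) * x ^ (q ^ 2) = x ^ (q ^ 3 + q) := by
        rw [← pow_add]; congr 1; omega
      rw [e, pow_add, pcard]
    linear_combination (x * x ^ (q ^ 2)) * pe1 + (2 * x * x ^ q) * pe2
  -- nonvanishing lemmas
  have nz : ∀ x : F, x ≠ 0 →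
      (x ^ q + x ^ (q ^ 2)) ≠ 0 ∧ (x ^ (q ^ 2) + 2 * x ^ q) ≠ 0 ∧
      (x ^ q + 3 * x ^ (q ^ 2)) ≠ 0 ∧ (x + 2 * x ^ (q ^ 2)) ≠ 0 ∧ (x + 3 * x ^ q) ≠ 0 := by
    intro x hx
    have hxqne : x ^ q ≠ 0 := pow_ne_zero _ hx
    have hT : (x ^ (q - 1)) ^ (q ^ 2 + q + 1) = 1 := by
      rw [← pow_mul]
      have e : (q - 1) * (q ^ 2 + q + 1) = q ^ 3 - 1 := by
        have e1 := Nat.sub_mul q 1 (q ^ 2 + q + 1)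
        have e2 : q * (q ^ 2 + q + 1) = q ^ 3 + q ^ 2 + q := by ring
        omega
      rw [e]; exact punit x hx
    have hTq : ((x ^ (q - 1)) ^ q) ^ (q ^ 2 + q + 1) = 1 := by
      rw [← pow_mul, mul_comm q (q ^ 2 + q + 1), pow_mul, hT, one_pow]
    have hTq1 : ((x ^ (q - 1)) ^ (q + 1)) ^ (q ^ 2 + q + 1) = 1 := by
      rw [← pow_mul, mul_comm (q + 1) (q ^ 2 + q + 1), pow_mul, hT, one_pow]
    have hxq : x ^ q = x * x ^ (q - 1) := by
      rw [← pow_succ']; congr 1; omega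
    have hvq : x ^ (q ^ 2) = x ^ q * (x ^ (q - 1)) ^ q := by
      rw [← pow_mul, ← pow_add]; congr 1
      have e1 := Nat.sub_mul q 1 q
      omega
    have htq1 : x ^ (q ^ 2) = x * (x ^ (q - 1)) ^ (q + 1) := by
      rw [← pow_mul, ← pow_succ']; congr 1
      have e1 := Nat.sub_mul q 1 (q + 1)
      have e2 : q * (q + 1) = q ^ 2 + q := by ring
      omega
    refine ⟨?_, ?_, ?_, ?_, ?_⟩ <;> intro h
    · have hz : x ^ q * (1 + (x ^ (q - 1)) ^ q) = 0 := by linear_combination h - hvq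
      have h1 : (1:F) + (x ^ (q - 1)) ^ q = 0 := by
        rcases mul_eq_zero.mp hz with h' | h'
        · exact absurd h' hxqne
        · exact h'
      exact noeq _ 4 hTq h44 h34 (by linear_combination h1 - h5)
    · have hz : x ^ q * ((x ^ (q - 1)) ^ q + 2) = 0 := by linear_combination h - hvq
      have h1 : (x ^ (q - 1)) ^ q + 2 = 0 := by
        rcases mul_eq_zero.mp hz with h' | h'
        · exact absurd h' hxqne
        · exact h'
      exact noeq _ 3 hTq h43 h33 (by linear_combination h1 - h5)
    · have hz : x ^ q * (1 + 3 * (x ^ (q - 1)) ^ q) = 0 := by linear_combination h - 3 * hvq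
      have h1 : (1:F) + 3 * (x ^ (q - 1)) ^ q = 0 := by
        rcases mul_eq_zero.mp hz with h' | h'
        · exact absurd h' hxqne
        · exact h'
      exact noeq _ 3 hTq h43 h33 (by linear_combination 2 * h1 - ((x ^ (q - 1)) ^ q + 1) * h5)
    · have hz : x * (1 + 2 * (x ^ (q - 1)) ^ (q + 1)) = 0 := by linear_combination h - 2 * htq1
      have h1 : (1:F) + 2 * (x ^ (q - 1)) ^ (q + 1) = 0 := by
        rcases mul_eq_zero.mp hz with h' | h'
        · exact absurd h' hx
        · exact h'
      exact noeq _ 2 hTq1 h42 h32 (by linear_combination 3 * h1 - ((x ^ (q - 1)) ^ (q + 1) + 1) * h5)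
    · have hz : x * (1 + 3 * x ^ (q - 1)) = 0 := by linear_combination h - 3 * hxq
      have h1 : (1:F) + 3 * x ^ (q - 1) = 0 := by
        rcases mul_eq_zero.mp hz with h' | h'
        · exact absurd h' hx
        · exact h'
      exact noeq _ 3 hT h43 h33 (by linear_combination 2 * h1 - (x ^ (q - 1) + 1) * h5)
  -- Frobenius step
  haveI : Fact (Nat.Prime 5) := ⟨by norm_num⟩
  haveI : ExpChar F 5 := ExpChar.prime (by norm_num)
  have e2x : ∀ x : F, x ^ (q ^ 2) = (x ^ q) ^ q := by
    intro x; rw [← pow_mul, hqq]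
  have e0x : ∀ x : F, x = (x ^ (q ^ 2)) ^ q := by
    intro x; rw [← pow_mul, hqqq]; exact (pcard x).symm
  have step : ∀ x0 x1 x2 z : F, x1 = x0 ^ q → x2 = x1 ^ q → x0 = x2 ^ q →
      z * (x0 * x1 * x2) = x0 ^ 2 * (x1 + x2) * (x2 + 2 * x1) →
      z ^ q * (x1 * x2 * x0) = x1 ^ 2 * (x2 + x0) * (x0 + 2 * x2) := by
    intro x0 x1 x2 z e1 e2 e0 h
    have hc := congrArg (iterateFrobenius F 5 k) h
    simp only [map_mul, map_add, map_pow, map_ofNat, iterateFrobenius_def, ← hq] at hc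
    rw [← e1, ← e2, ← e0] at hc
    linear_combination hc
  -- reduce to injectivity
  rw [← Finite.injective_iff_bijective]
  intro a b hab
  dsimp only at hab
  by_cases ha : a = 0
  · subst ha
    by_contra hb
    have hb' : b ≠ 0 := fun h => hb h.symm
    have h0 : (0:F) ^ (q ^ 2 - q + 1) + 2 * (0:F) ^ (q ^ 3 - q ^ 2 + q) + 3 * 0 = 0 := by
      rw [zero_pow (by omega), zero_pow (by omega)]; ring
    rw [h0] at hab
    obtain ⟨n1, n2, -, -, -⟩ := nz b hb'
    have kb := key b
    rw [← hab, zero_mul] at kb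
    exact (mul_ne_zero (mul_ne_zero (pow_ne_zero 2 hb') n1) n2) kb.symm
  · by_cases hb : b = 0
    · exfalso
      subst hb
      have h0 : (0:F) ^ (q ^ 2 - q + 1) + 2 * (0:F) ^ (q ^ 3 - q ^ 2 + q) + 3 * 0 = 0 := by
        rw [zero_pow (by omega), zero_pow (by omega)]; ring
      rw [h0] at hab
      obtain ⟨n1, n2, -, -, -⟩ := nz a ha
      have ka := key a
      rw [hab, zero_mul] at ka
      exact (mul_ne_zero (mul_ne_zero (pow_ne_zero 2 ha) n1) n2) ka.symm
    · set y : F := a ^ (q ^ 2 - q + 1) + 2 * a ^ (q ^ 3 - q ^ 2 + q) + 3 * a with hydef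
      have build : ∀ x : F,
          (x ^ (q ^ 2 - q + 1) + 2 * x ^ (q ^ 3 - q ^ 2 + q) + 3 * x) = y →
          y * (x * x ^ q * x ^ (q ^ 2)) = x ^ 2 * (x ^ q + x ^ (q ^ 2)) * (x ^ (q ^ 2) + 2 * x ^ q) ∧
          y ^ q * (x * x ^ q * x ^ (q ^ 2)) = (x ^ q) ^ 2 * (x ^ (q ^ 2) + x) * (x + 2 * x ^ (q ^ 2)) ∧
          (y ^ q) ^ q * (x * x ^ q * x ^ (q ^ 2)) = (x ^ (q ^ 2)) ^ 2 * (x + x ^ q) * (x ^ q + 2 * x) := by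
        intro x hfx
        have h0 : y * (x * x ^ q * x ^ (q ^ 2)) = x ^ 2 * (x ^ q + x ^ (q ^ 2)) * (x ^ (q ^ 2) + 2 * x ^ q) := by
          rw [← hfx]; exact key x
        have h1 := step x (x ^ q) (x ^ (q ^ 2)) y rfl (e2x x) (e0x x) h0
        have h2 := step (x ^ q) (x ^ (q ^ 2)) x (y ^ q) (e2x x) (e0x x) rfl h1
        exact ⟨h0, by linear_combination h1, by linear_combination h2⟩
      obtain ⟨ha0, ha1, ha2⟩ := build a hydef.symm
      obtain ⟨hb0, hb1, hb2⟩ := build b hab.symm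
      have hNa : a * a ^ q * a ^ (q ^ 2) ≠ 0 :=
        mul_ne_zero (mul_ne_zero ha (pow_ne_zero _ ha)) (pow_ne_zero _ ha)
      have Ha := mul_right_cancel₀ (pow_ne_zero 4 hNa)
        (coreAB a (a ^ q) (a ^ (q ^ 2)) y (y ^ q) ((y ^ q) ^ q) h5 ha0 ha1 ha2)
      have hNb : b * b ^ q * b ^ (q ^ 2) ≠ 0 :=
        mul_ne_zero (mul_ne_zero hb (pow_ne_zero _ hb)) (pow_ne_zero _ hb)
      have Hb := mul_right_cancel₀ (pow_ne_zero 4 hNb)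
        (coreAB b (b ^ q) (b ^ (q ^ 2)) y (y ^ q) ((y ^ q) ^ q) h5 hb0 hb1 hb2)
      have HCa := coreC a (a ^ q) (a ^ (q ^ 2)) y (y ^ q) ((y ^ q) ^ q) h5 ha0 ha1 ha2
      obtain ⟨-, -, n3, n4, n5⟩ := nz a ha
      have hRne : (4:F) * (a * a ^ q * a ^ (q ^ 2) * (a ^ q + 3 * a ^ (q ^ 2)) * (a + 2 * a ^ (q ^ 2)) * (a + 3 * a ^ q)) ^ 2 ≠ 0 :=
        mul_ne_zero h4ne (pow_ne_zero 2
          (mul_ne_zero (mul_ne_zero (mul_ne_zero hNa n3) n4) n5))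
      have hBne : (1*y^0*(y^q)^0*((y^q)^q)^3 + 3*y^0*(y^q)^1*((y^q)^q)^2 + 1*y^0*(y^q)^3*((y^q)^q)^0 + 4*y^1*(y^q)^1*((y^q)^q)^1 + 3*y^1*(y^q)^2*((y^q)^q)^0 + 3*y^2*(y^q)^0*((y^q)^q)^1 + 1*y^3*(y^q)^0*((y^q)^q)^0) ≠ 0 := by
        intro hB0
        rw [hB0, zero_mul] at HCa
        exact hRne HCa.symm
      exact mul_right_cancel₀ hBne (Ha.symm.trans Hb)
end

section
/- Let q be a power of an odd prime p ≥ 3 and F = GF(q^3). Let A, B ∈ GF(q) ⊆ F be nonzero with AB ≠ 1, AB + 2 ≠ 0, A + B + 1 ≠ 0, A² - AB - A + B² - B + 1 ≠ 0, and A³ + AB + 1 = 0. Then x ↦ x^(q^2-q+1) + A·x^(q^3-q^2+q) + B·x is a bijection of F. -/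
set_option maxHeartbeats 4000000 in
theorem stmt_5 (p k q : ℕ) (hp : p.Prime) (hodd : 3 ≤ p) (hk : 0 < k) (hq : q = p ^ k)
    (F : Type*) [Field F] [Fintype F] (hF : Fintype.card F = q ^ 3)
    (A B : F) (hAq : A ^ q = A) (hBq : B ^ q = B)
    (hA : A ≠ 0) (hB : B ≠ 0) (h1 : A * B ≠ 1) (h2 : A * B + 2 ≠ 0)
    (h3 : A + B + 1 ≠ 0) (h4 : A ^ 2 - A * B - A + B ^ 2 - B + 1 ≠ 0)
    (h5 : A ^ 3 + A * B + 1 = 0) :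
    Function.Bijective
      (fun x : F => x ^ (q ^ 2 - q + 1) + A * x ^ (q ^ 3 - q ^ 2 + q) + B * x) := by
  haveI : Fact p.Prime := ⟨hp⟩
  have hq3 : 3 ≤ q := by
    rw [hq]
    calc 3 ≤ p := hodd
    _ = p ^ 1 := (pow_one p).symm
    _ ≤ p ^ k := Nat.pow_le_pow_right (by omega) hk
  have hchar : CharP F p := by
    have hcp : CharP F (ringChar F) := ringChar.charP F
    have hrp : (ringChar F).Prime := CharP.char_is_prime F (ringChar F)
    obtain ⟨n, hn⟩ := FiniteField.card F (ringChar F)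
    have hdvd : ringChar F ∣ p := by
      have h1' : ringChar F ∣ Fintype.card F := by
        rw [hn.2]; exact dvd_pow_self _ (by positivity)
      rw [hF, hq] at h1'
      have : ringChar F ∣ p ^ (k * 3) := by rwa [pow_mul]
      exact hrp.dvd_of_dvd_pow this
    have : ringChar F = p := (Nat.prime_dvd_prime_iff_eq hrp hp).mp hdvd
    rwa [this] at hcp
  have hadd : ∀ a b : F, (a + b) ^ q = a ^ q + b ^ q := by
    intro a b; rw [hq]; exact add_pow_char_pow a b p k
  have hsub : ∀ a b : F, (a - b) ^ q = a ^ q - b ^ q := by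
    intro a b; rw [hq]; exact sub_pow_char_pow a b k
  have hq3pow : ∀ a : F, a ^ (q ^ 3) = a := by
    intro a; rw [← hF]; exact FiniteField.pow_card a
  have hle1 : q ≤ q ^ 2 := Nat.le_self_pow two_ne_zero q
  have hle2 : q ^ 2 ≤ q ^ 3 := Nat.pow_le_pow_right (by omega) (by omega)
  have hle3 : q ^ 3 ≤ q ^ 4 := Nat.pow_le_pow_right (by omega) (by omega)
  have e12 : q * q = q ^ 2 := by ring
  have e23 : q ^ 2 * q = q ^ 3 := by ring
  have ea : (q ^ 2 - q) * q = q ^ 3 - q ^ 2 := by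
    rw [Nat.sub_mul]; congr 1 <;> ring
  have ed : (q ^ 2 - 1) * q = q ^ 3 - q := by
    rw [Nat.sub_mul, one_mul, e23]
  have ec : (q ^ 2 - 1) * (q ^ 2 + q + 1) = (q ^ 3 - 1) * (q + 1) := by
    rw [Nat.sub_mul, Nat.sub_mul, one_mul, one_mul]
    have r1 : q ^ 2 * (q ^ 2 + q + 1) = q ^ 4 + q ^ 3 + q ^ 2 := by ring
    have r2 : q ^ 3 * (q + 1) = q ^ 4 + q ^ 3 := by ring
    rw [r1, r2]; omega
  have hA2q : (A ^ 2) ^ q = A ^ 2 := by rw [← pow_mul, mul_comm, pow_mul, hAq]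
  have hAq2 : A ^ (q ^ 2) = A := by rw [← e12, pow_mul, hAq, hAq]
  have hA3 : A ^ (q ^ 2 + q + 1) = A ^ 3 := by
    rw [pow_add, pow_add, hAq2, hAq]; ring
  have hA3ne1 : A ^ 3 ≠ 1 := fun h => h2 (by linear_combination h5 - h)
  have hA3nem1 : A ^ 3 + 1 ≠ 0 := by
    intro h
    have hab : A * B = 0 := by linear_combination h5 - h
    rcases mul_eq_zero.mp hab with h' | h'
    · exact hA h'
    · exact hB h'
  have hA6 : A ^ 6 - 1 ≠ 0 := by
    intro h
    have hsplit : (A ^ 3 - 1) * (A ^ 3 + 1) = 0 := by linear_combination h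
    rcases mul_eq_zero.mp hsplit with h' | h'
    · exact hA3ne1 (by linear_combination h')
    · exact hA3nem1 h'
  -- mu lemmas
  have hmuA : ∀ z : F, z ^ (q ^ 2 + q + 1) = 1 → z - A ≠ 0 := by
    intro z hz h
    have hzA : z = A := by linear_combination h
    rw [hzA, hA3] at hz
    exact hA3ne1 hz
  have hmuA2 : ∀ z : F, z ^ (q ^ 2 + q + 1) = 1 → A ^ 2 * z - 1 ≠ 0 := by
    intro z hz h
    have h1' : (A ^ 2 * z) ^ (q ^ 2 + q + 1) = 1 := by
      rw [show A ^ 2 * z = 1 from by linear_combination h]; exact one_pow _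
    rw [mul_pow, hz, mul_one, ← pow_mul, mul_comm 2, pow_mul, hA3] at h1'
    exact hA6 (by linear_combination h1')
  have hmuA1 : ∀ z : F, z ^ (q ^ 2 + q + 1) = 1 → A * (z) - 1 ≠ 0 := by
    intro z hz h
    have h1' : (A * z) ^ (q ^ 2 + q + 1) = 1 := by
      rw [show A * z = 1 from by linear_combination h]; exact one_pow _
    rw [mul_pow, hz, mul_one, hA3] at h1'
    exact hA3ne1 h1'
  -- KEY1
  have key1 : ∀ z : F,
      A * (z ^ (q ^ 2 - q + 1) + A * z ^ (q ^ 3 - q ^ 2 + q) + B * z) * z ^ (q ^ 2 - q)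
        = z * (A * z ^ (q ^ 2 - q) - 1) * (z ^ (q ^ 2 - q) - A ^ 2) := by
    intro z
    have e1 : z ^ (q ^ 2 - q + 1) = z ^ (q ^ 2 - q) * z := pow_succ z _
    have e2 : z ^ (q ^ 3 - q ^ 2 + q) = (z ^ (q ^ 2 - q)) ^ q * z ^ q := by
      rw [← pow_mul, ea, ← pow_add]
    have e3 : (z ^ (q ^ 2 - q)) ^ q * z ^ q * z ^ (q ^ 2 - q) = z := by
      rw [← pow_mul, ea, ← pow_add, ← pow_add,
        show q ^ 3 - q ^ 2 + q + (q ^ 2 - q) = q ^ 3 by omega]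
      exact hq3pow z
    rw [e1, e2]
    linear_combination A ^ 2 * e3 + (z * z ^ (q ^ 2 - q)) * h5
  -- kernel lemma
  have hker : ∀ z : F, z ≠ 0 →
      z ^ (q ^ 2 - q + 1) + A * z ^ (q ^ 3 - q ^ 2 + q) + B * z ≠ 0 := by
    intro z hz hfz
    have h0 := key1 z
    rw [hfz, mul_zero, zero_mul] at h0
    have hu : (z ^ (q ^ 2 - q)) ^ (q ^ 2 + q + 1) = 1 := by
      have eb : (q ^ 2 - q) * (q ^ 2 + q + 1) = q ^ 4 - q := by
        rw [Nat.sub_mul]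
        have r1 : q ^ 2 * (q ^ 2 + q + 1) = q ^ 4 + q ^ 3 + q ^ 2 := by ring
        have r2 : q * (q ^ 2 + q + 1) = q ^ 3 + q ^ 2 + q := by ring
        rw [r1, r2]; omega
      rw [← pow_mul, eb]
      have h4' : z ^ (q ^ 4 - q) * z ^ q = z ^ q := by
        rw [← pow_add, show q ^ 4 - q + q = q ^ 4 by omega,
          show q ^ 4 = q ^ 3 * q by ring, pow_mul, hq3pow z]
      exact mul_right_cancel₀ (pow_ne_zero q hz) (h4'.trans (one_mul (z ^ q)).symm)
    rcases mul_eq_zero.mp h0.symm with h' | h'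
    · rcases mul_eq_zero.mp h' with h'' | h''
      · exact hz h''
      · exact hmuA1 _ hu h''
    · have hzA : z ^ (q ^ 2 - q) = A ^ 2 := by linear_combination h'
      rw [hzA, ← pow_mul, mul_comm 2, pow_mul, hA3] at hu
      exact hA6 (by linear_combination hu)
  -- main per-variable lemma
  have main : ∀ z : F, z ≠ 0 →
      (z ^ (q ^ 2 - 1)) ^ (q ^ 2 + q + 1) = 1 ∧
      z ^ (q ^ 2 - 1) * ((z ^ (q ^ 2 - 1)) ^ q * ((z ^ (q ^ 2 - 1)) ^ q) ^ q) = 1 ∧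
      (z ^ (q ^ 2 - q + 1) + A * z ^ (q ^ 3 - q ^ 2 + q) + B * z) ^ (q ^ 2 - q) *
          ((z ^ (q ^ 2 - 1) - A) * (A ^ 2 * z ^ (q ^ 2 - 1) - 1))
        = (z ^ (q ^ 2 - 1)) ^ 2 *
          (((z ^ (q ^ 2 - 1)) ^ q - A) * (A ^ 2 * (z ^ (q ^ 2 - 1)) ^ q - 1)) := by
    intro z hz
    have hc0 : z ^ (q ^ 2 - q + 1) + A * z ^ (q ^ 3 - q ^ 2 + q) + B * z ≠ 0 := hker z hz
    have hz31 : z ^ (q ^ 3 - 1) = 1 := by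
      have h' : z ^ (q ^ 3 - 1) * z = z := by
        rw [← pow_succ, show q ^ 3 - 1 + 1 = q ^ 3 by omega]; exact hq3pow z
      exact mul_right_cancel₀ hz (h'.trans (one_mul z).symm)
    set c := z ^ (q ^ 2 - q + 1) + A * z ^ (q ^ 3 - q ^ 2 + q) + B * z with hc_def
    set s := z ^ (q ^ 2 - 1) with hs_def
    set X := s ^ q with hX_def
    set X2 := X ^ q with hX2_def
    have hs0 : s ≠ 0 := pow_ne_zero _ hz
    have hX0 : X ≠ 0 := pow_ne_zero _ hs0
    have hXz : X = z ^ (q ^ 3 - q) := by rw [hX_def, hs_def, ← pow_mul, ed]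
    have hsX : s * X = z ^ (q ^ 2 - q) := by
      have h1' : z ^ (q ^ 2 - 1) * z ^ (q ^ 3 - q) * z = z ^ (q ^ 3 - 1) * (z ^ (q ^ 2 - q) * z) := by
        rw [← pow_add, ← pow_succ, ← pow_succ, ← pow_add]
        congr 1; omega
      rw [hz31, one_mul] at h1'
      rw [hs_def, hXz]
      exact mul_right_cancel₀ hz h1'
    have hmuz : s ^ (q ^ 2 + q + 1) = 1 := by
      rw [hs_def, ← pow_mul, ec, pow_mul, hz31, one_pow]
    have hmu1 : s * (X * X2) = 1 := by
      have h1' : s * (X * X2) = s ^ (q ^ 2 + q + 1) := by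
        rw [hX2_def, hX_def, ← pow_mul s q q, ← pow_add s q (q * q),
          ← pow_succ' s (q + q * q)]
        congr 1
        rw [e12]; omega
      rw [h1', hmuz]
    have K1 : A * c * (s * X) = z * (A * (s * X) - 1) * ((s * X) - A ^ 2) := by
      rw [hsX, hc_def]; exact key1 z
    have K1q : A * c ^ q * (X * X2) = z ^ q * (A * (X * X2) - 1) * ((X * X2) - A ^ 2) := by
      have h' := congrArg (fun w : F => w ^ q) K1
      simp only [mul_pow, hsub, one_pow, hAq, hA2q] at h'
      rw [← hX_def] at h'
      rw [← hX2_def] at h'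
      exact h'
    have K2 : A * c ^ q * s = z ^ q * ((A - s) * (1 - A ^ 2 * s)) := by
      linear_combination s ^ 2 * K1q -
        (A * c ^ q * s - z ^ q * A + z ^ q * s - z ^ q * A * (s * (X * X2)) + z ^ q * A ^ 3 * s) * hmu1
    have K3 : A * c ^ (q ^ 2) * X = z ^ (q ^ 2) * ((A - X) * (1 - A ^ 2 * X)) := by
      have h' := congrArg (fun w : F => w ^ q) K2
      simp only [mul_pow, hsub, one_pow, hAq, hA2q] at h'
      rw [← hX_def] at h'
      rw [← pow_mul, ← pow_mul, e12] at h'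
      exact h'
    have hcc : c ^ (q ^ 2 - q) * c ^ q = c ^ (q ^ 2) := by
      rw [← pow_add]; congr 1; omega
    have hzq2 : z ^ (q ^ 2) = (s * X) * z ^ q := by
      rw [hsX, ← pow_add]; congr 1; omega
    rw [hzq2] at K3
    have hbig : (A * c ^ q * X) *
        (c ^ (q ^ 2 - q) * ((s - A) * (A ^ 2 * s - 1)) - s ^ 2 * ((X - A) * (A ^ 2 * X - 1))) = 0 := by
      linear_combination ((A - s) * (1 - A ^ 2 * s)) * K3 -
        (s * X * ((A - X) * (1 - A ^ 2 * X))) * K2 + (A * X * (A - s) * (1 - A ^ 2 * s)) * hcc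
    have hACX : A * c ^ q * X ≠ 0 :=
      mul_ne_zero (mul_ne_zero hA (pow_ne_zero _ hc0)) hX0
    have hfin := (mul_eq_zero.mp hbig).resolve_left hACX
    exact ⟨hmuz, hmu1, sub_eq_zero.mp hfin⟩
  -- injectivity
  have hinj : Function.Injective
      (fun x : F => x ^ (q ^ 2 - q + 1) + A * x ^ (q ^ 3 - q ^ 2 + q) + B * x) := by
    intro x y hxy0
    have hxy : x ^ (q ^ 2 - q + 1) + A * x ^ (q ^ 3 - q ^ 2 + q) + B * x
        = y ^ (q ^ 2 - q + 1) + A * y ^ (q ^ 3 - q ^ 2 + q) + B * y := hxy0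
    have hzero : (0 : F) ^ (q ^ 2 - q + 1) + A * (0 : F) ^ (q ^ 3 - q ^ 2 + q) + B * 0 = 0 := by
      rw [zero_pow (by omega : q ^ 2 - q + 1 ≠ 0), zero_pow (by omega : q ^ 3 - q ^ 2 + q ≠ 0)]
      ring
    by_cases hx0 : x = 0
    · by_cases hy0 : y = 0
      · rw [hx0, hy0]
      · exfalso
        apply hker y hy0
        rw [← hxy, hx0, hzero]
    · by_cases hy0 : y = 0
      · exfalso
        apply hker x hx0
        rw [hxy, hy0, hzero]
      · -- main case
        obtain ⟨hmus, hmux1, hlx⟩ := main x hx0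
        obtain ⟨hmut, hmuy1, hly⟩ := main y hy0
        rw [hxy] at hlx
        set s := x ^ (q ^ 2 - 1) with hsd
        set t := y ^ (q ^ 2 - 1) with htd
        set S := s ^ q with hSd
        set T := t ^ q with hTd
        set S2 := S ^ q with hS2d
        set T2 := T ^ q with hT2d
        have hs0 : s ≠ 0 := pow_ne_zero _ hx0
        have ht0 : t ≠ 0 := pow_ne_zero _ hy0
        have hmuS : S ^ (q ^ 2 + q + 1) = 1 := by
          rw [hSd, ← pow_mul, mul_comm, pow_mul, hmus, one_pow]
        have hmusS : (s * S) ^ (q ^ 2 + q + 1) = 1 := by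
          rw [mul_pow, hmus, hmuS, one_mul]
        -- E1
        have E1 : s ^ 2 * ((S - A) * (A ^ 2 * S - 1)) * ((t - A) * (A ^ 2 * t - 1))
            = t ^ 2 * ((T - A) * (A ^ 2 * T - 1)) * ((s - A) * (A ^ 2 * s - 1)) := by
          linear_combination (-((t - A) * (A ^ 2 * t - 1))) * hlx + ((s - A) * (A ^ 2 * s - 1)) * hly
        -- E1q
        have hs2q : (s ^ 2) ^ q = S ^ 2 := by
          rw [← pow_mul s 2 q, mul_comm 2 q, pow_mul s q 2, ← hSd]
        have ht2q : (t ^ 2) ^ q = T ^ 2 := by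
          rw [← pow_mul t 2 q, mul_comm 2 q, pow_mul t q 2, ← hTd]
        have hS2q2 : (S ^ 2) ^ q = S2 ^ 2 := by
          rw [← pow_mul S 2 q, mul_comm 2 q, pow_mul S q 2, ← hS2d]
        have hT2q2 : (T ^ 2) ^ q = T2 ^ 2 := by
          rw [← pow_mul T 2 q, mul_comm 2 q, pow_mul T q 2, ← hT2d]
        have hS2qs : S2 ^ q = s := by
          rw [hS2d, hSd, ← pow_mul (s ^ q) q q, ← pow_mul s q (q * q),
            show q * (q * q) = q ^ 3 by ring]
          exact hq3pow s
        have hT2qt : T2 ^ q = t := by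
          rw [hT2d, hTd, ← pow_mul (t ^ q) q q, ← pow_mul t q (q * q),
            show q * (q * q) = q ^ 3 by ring]
          exact hq3pow t
        have E1q : S ^ 2 * ((S2 - A) * (A ^ 2 * S2 - 1)) * ((T - A) * (A ^ 2 * T - 1))
            = T ^ 2 * ((T2 - A) * (A ^ 2 * T2 - 1)) * ((S - A) * (A ^ 2 * S - 1)) := by
          have h' := congrArg (fun w : F => w ^ q) E1
          simp only [mul_pow, hsub, one_pow, hAq, hA2q] at h'
          rw [hs2q, ht2q, ← hSd, ← hTd, ← hS2d, ← hT2d] at h'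
          exact h'
        have E1qq : S2 ^ 2 * ((s - A) * (A ^ 2 * s - 1)) * ((T2 - A) * (A ^ 2 * T2 - 1))
            = T2 ^ 2 * ((t - A) * (A ^ 2 * t - 1)) * ((S2 - A) * (A ^ 2 * S2 - 1)) := by
          have h' := congrArg (fun w : F => w ^ q) E1q
          simp only [mul_pow, hsub, one_pow, hAq, hA2q] at h'
          rw [hS2q2, hT2q2, hS2qs, hT2qt] at h'
          exact h'
        -- E3 via calc
        have E3 : ((s - A) * (A ^ 2 * s - 1)) * ((1 - A * (t * T)) * (A ^ 2 - t * T))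
            = ((t - A) * (A ^ 2 * t - 1)) * ((1 - A * (s * S)) * (A ^ 2 - s * S)) := by
          calc ((s - A) * (A ^ 2 * s - 1)) * ((1 - A * (t * T)) * (A ^ 2 - t * T))
              = ((s - A) * (A ^ 2 * s - 1)) * ((t * T) ^ 2 * ((T2 - A) * (A ^ 2 * T2 - 1))) := by
                linear_combination (-(((s - A) * (A ^ 2 * s - 1)) *
                  ((A ^ 2 - t * T) + A ^ 2 * (1 - A * (t * T)) + A ^ 2 * (t * (T * T2) - 1)))) * hmuy1
            _ = (s * (S * S2)) ^ 2 * (((s - A) * (A ^ 2 * s - 1)) * ((t * T) ^ 2 * ((T2 - A) * (A ^ 2 * T2 - 1)))) := by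
                rw [hmux1, one_pow, one_mul]
            _ = (t * (T * T2)) ^ 2 * (((t - A) * (A ^ 2 * t - 1)) * ((s * S) ^ 2 * ((S2 - A) * (A ^ 2 * S2 - 1)))) := by
                linear_combination ((s * S) ^ 2 * (t * T) ^ 2) * E1qq
            _ = ((t - A) * (A ^ 2 * t - 1)) * ((s * S) ^ 2 * ((S2 - A) * (A ^ 2 * S2 - 1))) := by
                rw [hmuy1, one_pow, one_mul]
            _ = ((t - A) * (A ^ 2 * t - 1)) * ((1 - A * (s * S)) * (A ^ 2 - s * S)) := by
                linear_combination (((t - A) * (A ^ 2 * t - 1)) *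
                  ((A ^ 2 - s * S) + A ^ 2 * (1 - A * (s * S)) + A ^ 2 * (s * (S * S2) - 1))) * hmux1
        -- resultant steps
        have hd0 : (A * t ^ 2 * (s - A) * ((s - A) * (A ^ 2 * s - 1))) *
            (((A ^ 3 + 1) * t * (A ^ 2 * s - 1) * (A - t)) * T +
              ((t - A) * (A ^ 2 * t - 1) * ((A ^ 3 + 1) * (s * S) - (A * s + A ^ 2)) -
                A * (A ^ 2 * s - 1) * ((A - t) * (A + t)))) = 0 := by
          linear_combination (-(A ^ 2 * t ^ 2 * ((s - A) * (A ^ 2 * s - 1)))) * E3 +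
            (-(A * t ^ 2 * ((s - A) * (A ^ 2 * s - 1)))) * E1
        have hpre : A * t ^ 2 * (s - A) * ((s - A) * (A ^ 2 * s - 1)) ≠ 0 :=
          mul_ne_zero (mul_ne_zero (mul_ne_zero hA (pow_ne_zero _ ht0)) (hmuA s hmus))
            (mul_ne_zero (hmuA s hmus) (hmuA2 s hmus))
        have hd : ((A ^ 3 + 1) * t * (A ^ 2 * s - 1) * (A - t)) * T +
            ((t - A) * (A ^ 2 * t - 1) * ((A ^ 3 + 1) * (s * S) - (A * s + A ^ 2)) -
              A * (A ^ 2 * s - 1) * ((A - t) * (A + t))) = 0 :=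
          (mul_eq_zero.mp hd0).resolve_left hpre
        have hfact : (s - t) * (A * s * (t ^ 2 * ((A ^ 3 + 1) ^ 2 * ((A ^ 3 - 1) *
            ((t - A) ^ 2 * ((A ^ 2 * s - 1) * ((A ^ 2 * t - 1) *
              ((S - A) * (A * (s * S) - 1))))))))) = 0 := by
          linear_combination
            (-(((A ^ 3 + 1) * t * (A ^ 2 * s - 1) * (A - t)) ^ 2)) * E1 -
            ((-(A ^ 2 * t ^ 2 * ((s - A) * (A ^ 2 * s - 1)))) *
                (((t - A) * (A ^ 2 * t - 1) * ((A ^ 3 + 1) * (s * S) - (A * s + A ^ 2)) -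
                  A * (A ^ 2 * s - 1) * ((A - t) * (A + t))) -
                  ((A ^ 3 + 1) * t * (A ^ 2 * s - 1) * (A - t)) * T) -
              ((A ^ 3 + 1) * t ^ 2 * ((s - A) * (A ^ 2 * s - 1))) *
                ((A ^ 3 + 1) * t * (A ^ 2 * s - 1) * (A - t))) * hd
        have hrest : A * s * (t ^ 2 * ((A ^ 3 + 1) ^ 2 * ((A ^ 3 - 1) *
            ((t - A) ^ 2 * ((A ^ 2 * s - 1) * ((A ^ 2 * t - 1) *
              ((S - A) * (A * (s * S) - 1)))))))) ≠ 0 := by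
          apply mul_ne_zero (mul_ne_zero hA hs0)
          apply mul_ne_zero (pow_ne_zero _ ht0)
          apply mul_ne_zero (pow_ne_zero _ hA3nem1)
          apply mul_ne_zero (sub_ne_zero_of_ne hA3ne1)
          apply mul_ne_zero (pow_ne_zero _ (hmuA t hmut))
          apply mul_ne_zero (hmuA2 s hmus)
          apply mul_ne_zero (hmuA2 t hmut)
          exact mul_ne_zero (hmuA S hmuS) (hmuA1 (s * S) hmusS)
        have hst : s = t := by
          have h' := (mul_eq_zero.mp hfact).resolve_right hrest
          exact sub_eq_zero.mp h'
        -- conclude x = y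
        have hxq2 : x ^ (q ^ 2) = s * x := by
          rw [hsd, ← pow_succ]; congr 1; omega
        have hyq2 : y ^ (q ^ 2) = t * y := by
          rw [htd, ← pow_succ]; congr 1; omega
        set l := x * y⁻¹ with hld
        have hl0 : l ≠ 0 := mul_ne_zero hx0 (inv_ne_zero hy0)
        have hlq2 : l ^ (q ^ 2) = l := by
          rw [hld, mul_pow, inv_pow, hxq2, hyq2, hst, mul_inv]
          rw [show t * x * (t⁻¹ * y⁻¹) = t * t⁻¹ * (x * y⁻¹) from by ring,
            mul_inv_cancel₀ ht0, one_mul]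
        have hlq : l ^ q = l := by
          have h' : l ^ (q ^ 3) = l ^ q := by
            rw [show q ^ 3 = q ^ 2 * q by ring, pow_mul, hlq2]
          rw [← h', hq3pow l]
        have hlE1 : l ^ (q ^ 2 - q + 1) = l := by
          have h' : l ^ (q ^ 2 - q + 1) * l ^ q = l ^ (q ^ 2) * l := by
            rw [← pow_add, ← pow_succ]; congr 1; omega
          rw [hlq, hlq2] at h'
          exact mul_right_cancel₀ hl0 h'
        have hlE2 : l ^ (q ^ 3 - q ^ 2 + q) = l := by
          have h' : l ^ (q ^ 3 - q ^ 2 + q) * l ^ (q ^ 2) = l ^ (q ^ 3) * l ^ q := by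
            rw [← pow_add, ← pow_add]; congr 1; omega
          rw [hlq2, hq3pow l, hlq] at h'
          exact mul_right_cancel₀ hl0 h'
        have hxl : x = l * y := by
          rw [hld]; field_simp
        have key : l * (y ^ (q ^ 2 - q + 1) + A * y ^ (q ^ 3 - q ^ 2 + q) + B * y)
            = y ^ (q ^ 2 - q + 1) + A * y ^ (q ^ 3 - q ^ 2 + q) + B * y := by
          conv_rhs => rw [← hxy]
          rw [hxl, mul_pow l y (q ^ 2 - q + 1), mul_pow l y (q ^ 3 - q ^ 2 + q), hlE1, hlE2]
          ring
        have hl1 : l = 1 :=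
          mul_right_cancel₀ (hker y hy0) (key.trans (one_mul _).symm)
        rw [hxl, hl1, one_mul]
  exact Finite.injective_iff_bijective.mp hinj
end

section
/- Let q be a prime power, F = GF(q^3), and let A, C ∈ GF(q) satisfy C² - C + 1 = 0, A³ ≠ -1, and suppose the polynomial m(t) = C·t³ + A(C+1)·t² + A²·t - C has no root u ∈ F with u^(q^2+q+1) = 1. Then x ↦ x^(q^2+q-1) + A·x^(q^2) + C·x is a bijection of F. -/
set_option maxHeartbeats 3200000 in
theorem stmt_6 (q : ℕ) (hq : IsPrimePow q)
    (F : Type*) [Field F] [Fintype F] (hF : Fintype.card F = q ^ 3)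
    (A C : F) (hAq : A ^ q = A) (hCq : C ^ q = C)
    (hC : C ^ 2 - C + 1 = 0) (hA : A ^ 3 ≠ -1)
    (hm : ∀ u : F, u ^ (q ^ 2 + q + 1) = 1 →
      C * u ^ 3 + A * (C + 1) * u ^ 2 + A ^ 2 * u - C ≠ 0) :
    Function.Bijective
      (fun x : F => x ^ (q ^ 2 + q - 1) + A * x ^ (q ^ 2) + C * x) := by
  classical
  obtain ⟨p, kk, hpp, hkk, hpk⟩ := hq
  have hp' : Nat.Prime p := Nat.prime_iff.mpr hpp
  have hq2 : 2 ≤ q := by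
    calc 2 ≤ p := hp'.two_le
    _ ≤ p ^ kk := Nat.le_self_pow (by omega) p
    _ = q := hpk
  -- characteristic
  haveI _inst : CharP F (ringChar F) := ringChar.charP F
  obtain ⟨n2, hpr, hcard⟩ := FiniteField.card F (ringChar F)
  have hpeq : p = ringChar F := by
    have hdvd : p ∣ ringChar F ^ (n2 : ℕ) := by
      rw [← hcard, hF, ← hpk, ← pow_mul]
      exact dvd_pow_self p (by positivity)
    exact (Nat.prime_dvd_prime_iff_eq hp' hpr).mp (hp'.dvd_of_dvd_pow hdvd)
  haveI : Fact (Nat.Prime (ringChar F)) := ⟨hpr⟩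
  have hfrob : ∀ x y : F, (x + y) ^ q = x ^ q + y ^ q := by
    intro x y
    rw [← hpk, hpeq]
    exact add_pow_char_pow x y (ringChar F) kk
  have hcube : ∀ z : F, z ^ (q ^ 3) = z := by
    intro z; rw [← hF]; exact FiniteField.pow_card z
  obtain ⟨n, rfl⟩ : ∃ n, q = n + 1 := ⟨q - 1, by omega⟩
  clear hpk hq2 hcard hpeq hpr
  -- basic pow facts
  have hsplit : ∀ z : F, z ^ ((n+1) ^ 2 + (n+1) + 1) = (z ^ (n+1)) ^ (n+1) * z ^ (n+1) * z := by
    intro z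
    rw [← pow_mul]; ring
  have hmu : ∀ z : F, z ≠ 0 → (z ^ n) ^ ((n+1) ^ 2 + (n+1) + 1) = 1 := by
    intro z hz
    have h1 : (z ^ n) ^ ((n+1) ^ 2 + (n+1) + 1) * z = z := by
      rw [← pow_mul, ← pow_succ, show n * ((n+1) ^ 2 + (n+1) + 1) + 1 = (n+1) ^ 3 from by ring]
      exact hcube z
    exact mul_right_cancel₀ hz (by rw [h1, one_mul])
  have hr_of : ∀ u : F, u ^ ((n+1) ^ 2 + (n+1) + 1) = 1 →
      u * u ^ (n+1) * (u ^ (n+1)) ^ (n+1) = 1 := by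
    intro u hu
    rw [← hu, hsplit]; ring
  have hwq : ∀ u : F, ((u ^ (n+1)) ^ (n+1)) ^ (n+1) = u := by
    intro u
    rw [← pow_mul, ← pow_mul, show (n+1) * ((n+1) * (n+1)) = (n+1) ^ 3 from by ring]
    exact hcube u
  -- Frobenius images of the basic expressions
  have hNq : ∀ u : F, (u ^ (n+1) + C * u + A) ^ (n+1)
      = (u ^ (n+1)) ^ (n+1) + C * u ^ (n+1) + A := by
    intro u
    rw [hfrob, hfrob, mul_pow, hCq, hAq]
  have hDq : ∀ u : F, (u ^ 2 * u ^ (n+1) + A * (u * u ^ (n+1)) + C) ^ (n+1)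
      = (u ^ (n+1)) ^ 2 * (u ^ (n+1)) ^ (n+1) + A * (u ^ (n+1) * (u ^ (n+1)) ^ (n+1)) + C := by
    intro u
    rw [hfrob, hfrob, mul_pow, mul_pow, mul_pow, pow_right_comm u 2 (n+1), hAq, hCq]
  have hNqq : ∀ u : F, ((u ^ (n+1)) ^ (n+1) + C * u ^ (n+1) + A) ^ (n+1)
      = u + C * (u ^ (n+1)) ^ (n+1) + A := by
    intro u
    rw [hfrob, hfrob, mul_pow, hCq, hAq, hwq]
  have hDqq : ∀ u : F, ((u ^ (n+1)) ^ 2 * (u ^ (n+1)) ^ (n+1) + A * (u ^ (n+1) * (u ^ (n+1)) ^ (n+1)) + C) ^ (n+1)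
      = ((u ^ (n+1)) ^ (n+1)) ^ 2 * u + A * ((u ^ (n+1)) ^ (n+1) * u) + C := by
    intro u
    rw [hfrob, hfrob, mul_pow, mul_pow, mul_pow, pow_right_comm (u ^ (n+1)) 2 (n+1), hAq, hCq, hwq]
  -- key nonvanishing facts on mu
  have keyN : ∀ u : F, u ^ ((n+1) ^ 2 + (n+1) + 1) = 1 → u ^ (n+1) + C * u + A ≠ 0 := by
    intro u hu hN
    have hr := hr_of u hu
    have hN2 : (u ^ (n+1)) ^ (n+1) + C * u ^ (n+1) + A = 0 := by
      rw [← hNq u, hN]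
      exact zero_pow (Nat.succ_ne_zero n)
    refine hm u hu ?_
    linear_combination (C^2*u*(u^(n+1)) - C^3*u^2 + A*C*u - A*C^2*u) * hN + (-(C*u*(u^(n+1)))) * hN2 + C * hr + (C*u^3 + C^2*u^3 + A*u^2 + 2*A*C*u^2 + A^2*u) * hC
  have keyD : ∀ u : F, u ^ ((n+1) ^ 2 + (n+1) + 1) = 1 →
      u ^ 2 * u ^ (n+1) + A * (u * u ^ (n+1)) + C ≠ 0 := by
    intro u hu hD
    have hr := hr_of u hu
    have hD2 : (u ^ (n+1)) ^ 2 * (u ^ (n+1)) ^ (n+1) + A * (u ^ (n+1) * (u ^ (n+1)) ^ (n+1)) + C = 0 := by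
      rw [← hDq u, hD]
      exact zero_pow (Nat.succ_ne_zero n)
    refine keyN u hu ?_
    linear_combination u * hD2 - (u ^ (n+1) + A) * hr
  have keyQ : ∀ u : F, u ^ ((n+1) ^ 2 + (n+1) + 1) = 1 →
      ((-1) + (-1)*(u^(n+1))^3 + (-3)*u*(u^(n+1))^2 + (-1)*u^3*(u^(n+1))^3 + (1)*C + (1)*C*(u^(n+1))^3 + (1)*C*u^3*(u^(n+1))^3 + (-2)*A*(u^(n+1))^2 + (-2)*A*u*(u^(n+1)) + (-2)*A*u^2*(u^(n+1))^3 + (1)*A*C*(u^(n+1))^2 + (1)*A*C*u*(u^(n+1)) + (1)*A*C*u^2*(u^(n+1))^3 + (-1)*A^2*(u^(n+1)) + (-1)*A^2*u*(u^(n+1))^3 + (-1)*A^2*u^2*(u^(n+1))^2 + (-1)*A^3*u*(u^(n+1))^2) ≠ 0 := by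
    intro u hu hQ0
    have hr := hr_of u hu
    have hDne : u ^ 2 * u ^ (n+1) + A * (u * u ^ (n+1)) + C ≠ 0 := keyD u hu
    have hDqne : (u ^ (n+1)) ^ 2 * (u ^ (n+1)) ^ (n+1) + A * (u ^ (n+1) * (u ^ (n+1)) ^ (n+1)) + C ≠ 0 := by
      rw [← hDq u]
      exact pow_ne_zero _ hDne
    have hDqqne : ((u ^ (n+1)) ^ (n+1)) ^ 2 * u + A * ((u ^ (n+1)) ^ (n+1) * u) + C ≠ 0 := by
      rw [← hDqq u]
      exact pow_ne_zero _ hDqne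
    set Nu := u ^ (n+1) + C * u + A with hNu_def
    set Du := u ^ 2 * u ^ (n+1) + A * (u * u ^ (n+1)) + C with hDu_def
    set Nu1 := (u ^ (n+1)) ^ (n+1) + C * u ^ (n+1) + A with hNu1_def
    set Du1 := (u ^ (n+1)) ^ 2 * (u ^ (n+1)) ^ (n+1) + A * (u ^ (n+1) * (u ^ (n+1)) ^ (n+1)) + C with hDu1_def
    set Nu2 := u + C * (u ^ (n+1)) ^ (n+1) + A with hNu2_def
    set Du2 := ((u ^ (n+1)) ^ (n+1)) ^ 2 * u + A * ((u ^ (n+1)) ^ (n+1) * u) + C with hDu2_def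
    have k1 : u * Du1 = Nu := by
      rw [hDu1_def, hNu_def]
      linear_combination (u ^ (n+1) + A) * hr
    have k2 : u ^ (n+1) * Du2 = Nu1 := by
      rw [hDu2_def, hNu1_def]
      linear_combination ((u ^ (n+1)) ^ (n+1) + A) * hr
    have k3 : (u ^ (n+1)) ^ (n+1) * Du = Nu2 := by
      rw [hDu_def, hNu2_def]
      linear_combination (u + A) * hr
    have hC3 : C ^ 3 = -1 := by linear_combination (C + 1) * hC
    have prod : (C ^ 4 * Nu2) * (C ^ 4 * Nu1) * (C ^ 4 * Nu) = Du2 * Du1 * Du := by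
      linear_combination (-(C^12) * Nu1 * Nu2) * k1 + (-(C^12) * u * Du1 * Nu2) * k2 +
        (-(C^12) * (u * Du1) * (u ^ (n+1) * Du2)) * k3 + (C^12 * Du * Du1 * Du2) * hr +
        ((C^9 - C^6 + C^3 - 1) * Du * Du1 * Du2) * hC3
    set w0 : F := C ^ 4 * Nu * Du⁻¹ with hw0_def
    have hw0q : w0 ^ (n+1) = C ^ 4 * Nu1 * Du1⁻¹ := by
      rw [hw0_def, mul_pow, mul_pow, inv_pow, pow_right_comm C 4 (n+1), hCq, hNu_def, hDu_def, hNq u, hDq u, ← hNu1_def, ← hDu1_def]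
    have hw0qq : (w0 ^ (n+1)) ^ (n+1) = C ^ 4 * Nu2 * Du2⁻¹ := by
      rw [hw0q, mul_pow, mul_pow, inv_pow, pow_right_comm C 4 (n+1), hCq, hNu1_def, hDu1_def, hNqq u, hDqq u, ← hNu2_def, ← hDu2_def]
    have hw0mu : w0 ^ ((n+1) ^ 2 + (n+1) + 1) = 1 := by
      rw [hsplit w0, hw0qq, hw0q, hw0_def]
      have hprodne : Du2 * Du1 * Du ≠ 0 := mul_ne_zero (mul_ne_zero hDqqne hDqne) hDne
      calc C ^ 4 * Nu2 * Du2⁻¹ * (C ^ 4 * Nu1 * Du1⁻¹) * (C ^ 4 * Nu * Du⁻¹)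
          = ((C ^ 4 * Nu2) * (C ^ 4 * Nu1) * (C ^ 4 * Nu)) * (Du2 * Du1 * Du)⁻¹ := by
            rw [mul_inv, mul_inv]; ring
        _ = (Du2 * Du1 * Du) * (Du2 * Du1 * Du)⁻¹ := by rw [prod]
        _ = 1 := mul_inv_cancel₀ hprodne
    have hw0Du : w0 * Du = C ^ 4 * Nu := by
      rw [hw0_def, mul_assoc, inv_mul_cancel₀ hDne, mul_one]
    have hw0Du' : w0 * Du = -C * Nu := by
      rw [hw0Du, hNu_def]
      linear_combination ((C^2 + C) * (u ^ (n+1) + C * u + A)) * hC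
    have hmw0 : (C * w0 ^ 3 + A * (C + 1) * w0 ^ 2 + A ^ 2 * w0 - C) * Du ^ 3 = 0 := by
      have expand : (C * w0 ^ 3 + A * (C + 1) * w0 ^ 2 + A ^ 2 * w0 - C) * Du ^ 3
          = C * (w0 * Du) ^ 3 + A * (C + 1) * (w0 * Du) ^ 2 * Du + A ^ 2 * (w0 * Du) * Du ^ 2
            - C * Du ^ 3 := by ring
      rw [expand, hw0Du', hNu_def, hDu_def]
      linear_combination ((1) + (-1)*u^3 + (-1)*C + (1)*C*u^3 + (-1)*A*u^2 + (2)*A*C*u^2 + (1)*A^2*C*u) * hQ0 + ((1) + (1)*(u^(n+1))^3 + (3)*u*(u^(n+1))^2 + (-1)*u^3 + (-3)*u^4*(u^(n+1))^2 + (-1)*u^6*(u^(n+1))^3 + (-1)*C + (-1)*C*(u^(n+1))^3 + (1)*C*u^3 + (-1)*C^2 + (-1)*C^2*(u^(n+1))^3 + (-3)*C^2*u*(u^(n+1))^2 + (1)*C^2*u^3 + (-3)*C^3*u*(u^(n+1))^2 + (-3)*C^3*u^2*(u^(n+1)) + (-3)*C^4*u^2*(u^(n+1)) + (-1)*C^4*u^3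 + (-1)*C^5*u^3 + (2)*A*(u^(n+1))^2 + (2)*A*u*(u^(n+1)) + (-1)*A*u^2 + (1)*A*u^2*(u^(n+1))^3 + (-5)*A*u^3*(u^(n+1))^2 + (-2)*A*u^4*(u^(n+1)) + (-3)*A*u^5*(u^(n+1))^3 + (-1)*A*C*(u^(n+1))^2 + (-1)*A*C*u*(u^(n+1)) + (2)*A*C*u^2 + (1)*A*C*u^2*(u^(n+1))^3 + (4)*A*C*u^3*(u^(n+1))^2 + (1)*A*C*u^4*(u^(n+1)) + (-2)*A*C^2*(u^(n+1))^2 + (-2)*A*C^2*u*(u^(n+1)) + (1)*A*C^2*u^2 + (2)*A*C^2*u^3*(u^(n+1))^2 + (2)*A*C^2*u^4*(u^(n+1)) + (-4)*A*C^3*u*(u^(n+1)) + (-1)*A*C^3*u^2 + (1)*A*C^3*u^4*(u^(n+1)) + (-2)*A*C^4*u^2 + (1)*A^2*(u^(n+1)) + (1)*A^2*u*(u^(n+1))^3 + (-1)*A^2*u^2*(u^(n+1))^2 + (-3)*A^2*u^3*(u^(n+1)) + (-3)*A^2*u^4*(u^(n+1))^3 + (-1)*A^2*u^5*(u^(n+1))^2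 + (1)*A^2*C*u + (1)*A^2*C*u*(u^(n+1))^3 + (6)*A^2*C*u^2*(u^(n+1))^2 + (3)*A^2*C*u^3*(u^(n+1)) + (-1)*A^2*C^2*(u^(n+1)) + (2)*A^2*C^2*u^2*(u^(n+1))^2 + (4)*A^2*C^2*u^3*(u^(n+1)) + (-1)*A^2*C^3*u + (1)*A^2*C^3*u^3*(u^(n+1)) + (1)*A^3*u*(u^(n+1))^2 + (-1)*A^3*u^2*(u^(n+1)) + (-1)*A^3*u^3*(u^(n+1))^3 + (-2)*A^3*u^4*(u^(n+1))^2 + (2)*A^3*C*u*(u^(n+1))^2 + (3)*A^3*C*u^2*(u^(n+1)) + (2)*A^3*C^2*u^2*(u^(n+1)) + (-1)*A^4*u^3*(u^(n+1))^2 + (1)*A^4*C*u*(u^(n+1))) * hC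
    have hmw0' : C * w0 ^ 3 + A * (C + 1) * w0 ^ 2 + A ^ 2 * w0 - C = 0 := by
      rcases mul_eq_zero.mp hmw0 with h | h
      · exact h
      · exact absurd h (pow_ne_zero 3 hDne)
    exact hm w0 hw0mu hmw0'
  -- rewrite the exponent in the statement
  have hE : (n+1) ^ 2 + (n+1) - 1 = n ^ 2 + 3 * n + 1 := by
    rw [show (n+1) ^ 2 + (n+1) = (n ^ 2 + 3 * n + 1) + 1 from by ring]
    exact Nat.succ_sub_one _
  simp only [hE]
  rw [← Finite.injective_iff_bijective]
  intro a b hab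
  have hab' : a ^ (n ^ 2 + 3 * n + 1) + A * a ^ ((n+1) ^ 2) + C * a
      = b ^ (n ^ 2 + 3 * n + 1) + A * b ^ ((n+1) ^ 2) + C * b := hab
  have hfz : ∀ z : F, (z ^ (n ^ 2 + 3 * n + 1) + A * z ^ ((n+1) ^ 2) + C * z) * z ^ 2
      = z ^ 3 * ((z ^ n) ^ 2 * (z ^ n) ^ (n+1) + A * (z ^ n * (z ^ n) ^ (n+1)) + C) := by
    intro z; ring
  by_cases ha : a = 0
  · by_cases hb : b = 0
    · rw [ha, hb]
    · exfalso
      have h0 : (0:F) ^ (n ^ 2 + 3 * n + 1) + A * (0:F) ^ ((n+1) ^ 2) + C * 0 = 0 := by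
        rw [zero_pow (by positivity), zero_pow (by positivity)]; ring
      have hb0 : b ^ (n ^ 2 + 3 * n + 1) + A * b ^ ((n+1) ^ 2) + C * b = 0 := by
        rw [← hab', ha, h0]
      have h1 := hfz b
      rw [hb0, zero_mul] at h1
      have h2 : (b ^ n) ^ 2 * (b ^ n) ^ (n+1) + A * (b ^ n * (b ^ n) ^ (n+1)) + C = 0 := by
        have hb3 : b ^ 3 ≠ 0 := pow_ne_zero 3 hb
        rcases mul_eq_zero.mp h1.symm with h | h
        · exact absurd h hb3
        · exact h
      exact keyD (b ^ n) (hmu b hb) h2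
  · by_cases hb : b = 0
    · exfalso
      have h0 : (0:F) ^ (n ^ 2 + 3 * n + 1) + A * (0:F) ^ ((n+1) ^ 2) + C * 0 = 0 := by
        rw [zero_pow (by positivity), zero_pow (by positivity)]; ring
      have ha0 : a ^ (n ^ 2 + 3 * n + 1) + A * a ^ ((n+1) ^ 2) + C * a = 0 := by
        rw [hab', hb, h0]
      have h1 := hfz a
      rw [ha0, zero_mul] at h1
      have h2 : (a ^ n) ^ 2 * (a ^ n) ^ (n+1) + A * (a ^ n * (a ^ n) ^ (n+1)) + C = 0 := by
        have ha3 : a ^ 3 ≠ 0 := pow_ne_zero 3 ha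
        rcases mul_eq_zero.mp h1.symm with h | h
        · exact absurd h ha3
        · exact h
      exact keyD (a ^ n) (hmu a ha) h2
    · -- main case
      have hua := hmu a ha
      have hub := hmu b hb
      have hra := hr_of (a ^ n) hua
      have hrb := hr_of (b ^ n) hub
      have e1a := hfz a
      have e1b := hfz b
      have h1 : a * ((a ^ n) ^ 2 * (a ^ n) ^ (n+1) + A * (a ^ n * (a ^ n) ^ (n+1)) + C) * (a ^ 2 * b ^ 2)
          = b * ((b ^ n) ^ 2 * (b ^ n) ^ (n+1) + A * (b ^ n * (b ^ n) ^ (n+1)) + C) * (a ^ 2 * b ^ 2) := by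
        linear_combination (-(b ^ 2)) * e1a + a ^ 2 * e1b + (a ^ 2 * b ^ 2) * hab'
      have eD : a * ((a ^ n) ^ 2 * (a ^ n) ^ (n+1) + A * (a ^ n * (a ^ n) ^ (n+1)) + C)
          = b * ((b ^ n) ^ 2 * (b ^ n) ^ (n+1) + A * (b ^ n * (b ^ n) ^ (n+1)) + C) :=
        mul_right_cancel₀ (mul_ne_zero (pow_ne_zero 2 ha) (pow_ne_zero 2 hb)) h1
      have eDq := congrArg (fun z : F => z ^ (n+1)) eD
      simp only [mul_pow] at eDq
      rw [hDq (a ^ n), hDq (b ^ n), pow_succ a n, pow_succ b n] at eDq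
      have eN : a * ((a ^ n) ^ (n+1) + C * a ^ n + A) = b * ((b ^ n) ^ (n+1) + C * b ^ n + A) := by
        linear_combination eDq - (a * ((a ^ n) ^ (n+1) + A)) * hra + (b * ((b ^ n) ^ (n+1) + A)) * hrb
      have eNq := congrArg (fun z : F => z ^ (n+1)) eN
      simp only [mul_pow] at eNq
      rw [hNq (a ^ n), hNq (b ^ n), pow_succ a n, pow_succ b n] at eNq
      have h4 : a ^ n * (((a ^ n) ^ (n+1)) ^ (n+1) + C * (a ^ n) ^ (n+1) + A) * ((b ^ n) ^ (n+1) + C * b ^ n + A) * (a * b)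
          = b ^ n * (((b ^ n) ^ (n+1)) ^ (n+1) + C * (b ^ n) ^ (n+1) + A) * ((a ^ n) ^ (n+1) + C * a ^ n + A) * (a * b) := by
        linear_combination (b * ((b ^ n) ^ (n+1) + C * b ^ n + A)) * eNq
          - (b * b ^ n * (((b ^ n) ^ (n+1)) ^ (n+1) + C * (b ^ n) ^ (n+1) + A)) * eN
      have h4' : a ^ n * (((a ^ n) ^ (n+1)) ^ (n+1) + C * (a ^ n) ^ (n+1) + A) * ((b ^ n) ^ (n+1) + C * b ^ n + A)
          = b ^ n * (((b ^ n) ^ (n+1)) ^ (n+1) + C * (b ^ n) ^ (n+1) + A) * ((a ^ n) ^ (n+1) + C * a ^ n + A) :=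
        mul_right_cancel₀ (mul_ne_zero ha hb) h4
      have eP : ((b ^ n) ^ (n+1)) * ((b ^ n) ^ (n+1) + C * b ^ n + A) * (C * (a ^ n) * ((a ^ n) ^ (n+1)) ^ 2 + A * ((a ^ n) * ((a ^ n) ^ (n+1))) + 1)
          = ((a ^ n) ^ (n+1)) * ((a ^ n) ^ (n+1) + C * a ^ n + A) * (C * (b ^ n) * ((b ^ n) ^ (n+1)) ^ 2 + A * ((b ^ n) * ((b ^ n) ^ (n+1))) + 1) := by
        linear_combination ((a ^ n) ^ (n+1) * (b ^ n) ^ (n+1)) * h4'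
          - ((b ^ n) ^ (n+1) * ((b ^ n) ^ (n+1) + C * b ^ n + A)) * hra
          + ((a ^ n) ^ (n+1) * ((a ^ n) ^ (n+1) + C * a ^ n + A)) * hrb
      have h5 : (((a ^ n) ^ (n+1) + C * a ^ n + A) * ((b ^ n) ^ 2 * (b ^ n) ^ (n+1) + A * (b ^ n * (b ^ n) ^ (n+1)) + C)) * (a * b)
          = (((b ^ n) ^ (n+1) + C * b ^ n + A) * ((a ^ n) ^ 2 * (a ^ n) ^ (n+1) + A * (a ^ n * (a ^ n) ^ (n+1)) + C)) * (a * b) := by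
        linear_combination (b * ((b ^ n) ^ 2 * (b ^ n) ^ (n+1) + A * (b ^ n * (b ^ n) ^ (n+1)) + C)) * eN
          - (b * ((b ^ n) ^ (n+1) + C * b ^ n + A)) * eD
      have eE : ((a ^ n) ^ (n+1) + C * a ^ n + A) * ((b ^ n) ^ 2 * (b ^ n) ^ (n+1) + A * (b ^ n * (b ^ n) ^ (n+1)) + C)
          = ((b ^ n) ^ (n+1) + C * b ^ n + A) * ((a ^ n) ^ 2 * (a ^ n) ^ (n+1) + A * (a ^ n * (a ^ n) ^ (n+1)) + C) :=
        mul_right_cancel₀ (mul_ne_zero ha hb) h5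
      have main : ((-1)*((a^n)^(n+1)) + (-1)*((a^n)^(n+1))^4 + (-1)*(a^n) + (-4)*(a^n)*((a^n)^(n+1))^3 + (-1)*(a^n)^3*((a^n)^(n+1))^4 + (-1)*(a^n)^4*((a^n)^(n+1))^3 + (1)*C*((a^n)^(n+1)) + (1)*C*((a^n)^(n+1))^4 + (-3)*C*(a^n)^2*((a^n)^(n+1))^2 + (1)*C*(a^n)^3*((a^n)^(n+1))^4 + (-1)*A + (-3)*A*((a^n)^(n+1))^3 + (-6)*A*(a^n)*((a^n)^(n+1))^2 + (-1)*A*(a^n)^2*((a^n)^(n+1)) + (-2)*A*(a^n)^2*((a^n)^(n+1))^4 + (-2)*A*(a^n)^3*((a^n)^(n+1))^3 + (1)*A*C + (2)*A*C*((a^n)^(n+1))^3 + (-1)*A*C*(a^n)^2*((a^n)^(n+1)) + (1)*A*C*(a^n)^2*((a^n)^(n+1))^4 + (-3)*A^2*((a^n)^(n+1))^2 + (-2)*A^2*(a^n)*((a^n)^(n+1)) + (-1)*A^2*(a^n)*((a^n)^(n+1))^4 + (-3)*A^2*(a^n)^2*((a^n)^(n+1))^3 + (1)*A^2*C*((a^n)^(n+1))^2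 + (-1)*A^2*C*(a^n)^3*((a^n)^(n+1))^2 + (-1)*A^3*((a^n)^(n+1)) + (-2)*A^3*(a^n)*((a^n)^(n+1))^3 + (-1)*A^3*(a^n)^2*((a^n)^(n+1))^2 + (-1)*A^3*C*(a^n)^2*((a^n)^(n+1))^2 + (-1)*A^4*(a^n)*((a^n)^(n+1))^2) * (b ^ n - a ^ n)
          * (C * (b ^ n) ^ 3 + A * (C + 1) * (b ^ n) ^ 2 + A ^ 2 * (b ^ n) - C) = 0 := by
        linear_combination (((1)*((a^n)^(n+1))*(b^n)^2 + (-1)*(a^n)^2*((a^n)^(n+1)) + (-1)*C + (1)*C*(a^n)*(b^n)^2 + (1)*A*(b^n)^2 + (1)*A*((a^n)^(n+1))*(b^n) + (-1)*A*(a^n)*((a^n)^(n+1)) + (1)*A*C*(a^n)*(b^n) + (1)*A^2*(b^n))^2) * eP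
          - (((1) + (-1)*C*((a^n)^(n+1))^2*(b^n) + (1)*C*(a^n)*((a^n)^(n+1))^2 + (-1)*C^2*(a^n)*((a^n)^(n+1))*(b^n) + (1)*A*(a^n)*((a^n)^(n+1)) + (-1)*A*C*((a^n)^(n+1))*(b^n)) * (((b ^ n) ^ (n+1)) * ((1)*((a^n)^(n+1))*(b^n)^2 + (-1)*(a^n)^2*((a^n)^(n+1)) + (-1)*C + (1)*C*(a^n)*(b^n)^2 + (1)*A*(b^n)^2 + (1)*A*((a^n)^(n+1))*(b^n) + (-1)*A*(a^n)*((a^n)^(n+1)) + (1)*A*C*(a^n)*(b^n) + (1)*A^2*(b^n)) + ((-1)*C*((a^n)^(n+1)) + (1)*C*(a^n)^2*((a^n)^(n+1))*(b^n) + (1)*C^2*(b^n) + (-1)*C^2*(a^n) + (1)*A*(a^n)^2*((a^n)^(n+1)) + (1)*A*C*(a^n)*((a^n)^(n+1))*(b^n) + (1)*A^2*(a^n)*((a^n)^(n+1)))) + ((1)*C*(b^n) + (1)*C^2*(a^n)*((a^n)^(n+1))^2*(b^n) + (1)*A + (-1)*A*((a^n)^(n+1))^2*(b^n) + (1)*A*C*(a^n)*((a^n)^(n+1))^2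 + (-1)*A^2*((a^n)^(n+1))*(b^n) + (1)*A^2*(a^n)*((a^n)^(n+1))) * ((1)*((a^n)^(n+1))*(b^n)^2 + (-1)*(a^n)^2*((a^n)^(n+1)) + (-1)*C + (1)*C*(a^n)*(b^n)^2 + (1)*A*(b^n)^2 + (1)*A*((a^n)^(n+1))*(b^n) + (-1)*A*(a^n)*((a^n)^(n+1)) + (1)*A*C*(a^n)*(b^n) + (1)*A^2*(b^n))) * eE
          + ((1)*((a^n)^(n+1))^4*(b^n)^4 + (-2)*(a^n)^2*((a^n)^(n+1))^4*(b^n)^2 + (1)*(a^n)^4*((a^n)^(n+1))^4 + (1)*C*((a^n)^(n+1))*(b^n) + (-1)*C*((a^n)^(n+1))*(b^n)^4 + (-2)*C*((a^n)^(n+1))^3*(b^n)^2 + (1)*C*((a^n)^(n+1))^4*(b^n) + (1)*C*(a^n)*(b^n) + (-1)*C*(a^n)*(b^n)^4 + (-1)*C*(a^n)*((a^n)^(n+1)) + (1)*C*(a^n)*((a^n)^(n+1))*(b^n)^3 + (4)*C*(a^n)*((a^n)^(n+1))^3*(b^n) + (-1)*C*(a^n)*((a^n)^(n+1))^3*(b^n)^4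 + (-1)*C*(a^n)*((a^n)^(n+1))^4 + (1)*C*(a^n)*((a^n)^(n+1))^4*(b^n)^3 + (-1)*C*(a^n)^2 + (1)*C*(a^n)^2*(b^n)^3 + (-2)*C*(a^n)^2*((a^n)^(n+1))^3 + (4)*C*(a^n)^2*((a^n)^(n+1))^3*(b^n)^3 + (-2)*C*(a^n)^2*((a^n)^(n+1))^4*(b^n)^2 + (-4)*C*(a^n)^3*((a^n)^(n+1))^3*(b^n)^2 + (1)*C*(a^n)^3*((a^n)^(n+1))^4*(b^n) + (-1)*C*(a^n)^3*((a^n)^(n+1))^4*(b^n)^4 + (1)*C*(a^n)^4*((a^n)^(n+1))^3*(b^n) + (-1)*C*(a^n)^4*((a^n)^(n+1))^3*(b^n)^4 + (1)*C*(a^n)^4*((a^n)^(n+1))^4*(b^n)^3 + (1)*C*(a^n)^5*((a^n)^(n+1))^3*(b^n)^3 + (1)*C^2*((a^n)^(n+1))^2*(b^n)^3 + (-2)*C^2*((a^n)^(n+1))^3*(b^n)^2 + (1)*C^2*(a^n)*(b^n) + (-1)*C^2*(a^n)*(b^n)^4 + (-4)*C^2*(a^n)*((a^n)^(n+1))^2*(b^n)^2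 + (4)*C^2*(a^n)*((a^n)^(n+1))^3*(b^n) + (-1)*C^2*(a^n)*((a^n)^(n+1))^3*(b^n)^4 + (-1)*C^2*(a^n)^2 + (1)*C^2*(a^n)^2*(b^n)^3 + (4)*C^2*(a^n)^2*((a^n)^(n+1))^2*(b^n) + (-1)*C^2*(a^n)^2*((a^n)^(n+1))^2*(b^n)^4 + (-2)*C^2*(a^n)^2*((a^n)^(n+1))^3 + (4)*C^2*(a^n)^2*((a^n)^(n+1))^3*(b^n)^3 + (-1)*C^2*(a^n)^3*((a^n)^(n+1))^2 + (3)*C^2*(a^n)^3*((a^n)^(n+1))^2*(b^n)^3 + (-4)*C^2*(a^n)^3*((a^n)^(n+1))^3*(b^n)^2 + (-2)*C^2*(a^n)^4*((a^n)^(n+1))^2*(b^n)^2 + (1)*C^2*(a^n)^4*((a^n)^(n+1))^3*(b^n) + (-1)*C^2*(a^n)^4*((a^n)^(n+1))^3*(b^n)^4 + (1)*C^2*(a^n)^5*((a^n)^(n+1))^3*(b^n)^3 + (1)*C^3*((a^n)^(n+1))^2*(b^n)^3 + (1)*C^3*(a^n)*((a^n)^(n+1))*(b^n)^3 + (-4)*C^3*(a^n)*((a^n)^(n+1))^2*(b^n)^2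 + (-2)*C^3*(a^n)^2*((a^n)^(n+1))*(b^n)^2 + (4)*C^3*(a^n)^2*((a^n)^(n+1))^2*(b^n) + (-1)*C^3*(a^n)^2*((a^n)^(n+1))^2*(b^n)^4 + (1)*C^3*(a^n)^3*((a^n)^(n+1))*(b^n) + (-1)*C^3*(a^n)^3*((a^n)^(n+1))^2 + (3)*C^3*(a^n)^3*((a^n)^(n+1))^2*(b^n)^3 + (-2)*C^3*(a^n)^4*((a^n)^(n+1))^2*(b^n)^2 + (1)*C^4*(a^n)*((a^n)^(n+1))*(b^n)^3 + (-2)*C^4*(a^n)^2*((a^n)^(n+1))*(b^n)^2 + (1)*C^4*(a^n)^3*((a^n)^(n+1))*(b^n) + (-1)*A*((a^n)^(n+1))*(b^n)^3 + (3)*A*((a^n)^(n+1))^3*(b^n)^4 + (1)*A*((a^n)^(n+1))^4*(b^n)^3 + (-1)*A*(a^n)*(b^n)^3 + (1)*A*(a^n)*((a^n)^(n+1))*(b^n)^2 + (-4)*A*(a^n)*((a^n)^(n+1))^3*(b^n)^3 + (-1)*A*(a^n)*((a^n)^(n+1))^4*(b^n)^2 + (1)*A*(a^n)^2*(b^n)^2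 + (-2)*A*(a^n)^2*((a^n)^(n+1))^4*(b^n) + (2)*A*(a^n)^3*((a^n)^(n+1))^4 + (-1)*A*(a^n)^3*((a^n)^(n+1))^4*(b^n)^3 + (1)*A*(a^n)^4*((a^n)^(n+1))^3 + (-1)*A*(a^n)^4*((a^n)^(n+1))^3*(b^n)^3 + (1)*A*(a^n)^4*((a^n)^(n+1))^4*(b^n)^2 + (1)*A*(a^n)^5*((a^n)^(n+1))^3*(b^n)^2 + (1)*A*C*(b^n) + (-1)*A*C*(b^n)^4 + (-1)*A*C*((a^n)^(n+1))*(b^n)^3 + (-3)*A*C*((a^n)^(n+1))^2*(b^n)^2 + (1)*A*C*((a^n)^(n+1))^3*(b^n) + (-1)*A*C*(a^n) + (-1)*A*C*(a^n)*(b^n)^3 + (1)*A*C*(a^n)*((a^n)^(n+1))*(b^n)^2 + (6)*A*C*(a^n)*((a^n)^(n+1))^2*(b^n) + (-1)*A*C*(a^n)*((a^n)^(n+1))^3 + (1)*A*C*(a^n)*((a^n)^(n+1))^3*(b^n)^3 + (-1)*A*C*(a^n)*((a^n)^(n+1))^4*(b^n)^2 + (2)*A*C*(a^n)^2*(b^n)^2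 + (1)*A*C*(a^n)^2*((a^n)^(n+1))*(b^n) + (-1)*A*C*(a^n)^2*((a^n)^(n+1))*(b^n)^4 + (-3)*A*C*(a^n)^2*((a^n)^(n+1))^2 + (1)*A*C*(a^n)^2*((a^n)^(n+1))^2*(b^n)^3 + (1)*A*C*(a^n)^2*((a^n)^(n+1))^4*(b^n) + (-1)*A*C*(a^n)^2*((a^n)^(n+1))^4*(b^n)^4 + (-1)*A*C*(a^n)^3*((a^n)^(n+1)) + (1)*A*C*(a^n)^3*((a^n)^(n+1))*(b^n)^3 + (-1)*A*C*(a^n)^3*((a^n)^(n+1))^2*(b^n)^2 + (-2)*A*C*(a^n)^3*((a^n)^(n+1))^3*(b^n) + (-2)*A*C*(a^n)^3*((a^n)^(n+1))^3*(b^n)^4 + (1)*A*C*(a^n)^3*((a^n)^(n+1))^4*(b^n)^3 + (1)*A*C*(a^n)^4*((a^n)^(n+1))^3 + (2)*A*C*(a^n)^5*((a^n)^(n+1))^3*(b^n)^2 + (1)*A*C^2*((a^n)^(n+1))*(b^n)^3 + (-2)*A*C^2*((a^n)^(n+1))^2*(b^n)^2 + (-1)*A*C^2*(a^n)*(b^n)^3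 + (-3)*A*C^2*(a^n)*((a^n)^(n+1))*(b^n)^2 + (3)*A*C^2*(a^n)*((a^n)^(n+1))^2*(b^n) + (-1)*A*C^2*(a^n)*((a^n)^(n+1))^2*(b^n)^4 + (1)*A*C^2*(a^n)*((a^n)^(n+1))^3*(b^n)^3 + (1)*A*C^2*(a^n)^2*(b^n)^2 + (3)*A*C^2*(a^n)^2*((a^n)^(n+1))*(b^n) + (-1)*A*C^2*(a^n)^2*((a^n)^(n+1))^2 + (3)*A*C^2*(a^n)^2*((a^n)^(n+1))^2*(b^n)^3 + (-2)*A*C^2*(a^n)^2*((a^n)^(n+1))^3*(b^n)^2 + (-1)*A*C^2*(a^n)^3*((a^n)^(n+1)) + (1)*A*C^2*(a^n)^3*((a^n)^(n+1))^3*(b^n) + (-1)*A*C^2*(a^n)^3*((a^n)^(n+1))^3*(b^n)^4 + (-2)*A*C^2*(a^n)^4*((a^n)^(n+1))^2*(b^n) + (1)*A*C^2*(a^n)^4*((a^n)^(n+1))^3*(b^n)^3 + (1)*A*C^3*((a^n)^(n+1))*(b^n)^3 + (-2)*A*C^3*(a^n)*((a^n)^(n+1))*(b^n)^2 + (1)*A*C^3*(a^n)^2*((a^n)^(n+1))*(b^n)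 + (1)*A*C^3*(a^n)^2*((a^n)^(n+1))^2*(b^n)^3 + (-1)*A*C^3*(a^n)^3*((a^n)^(n+1))^2*(b^n)^2 + (-1)*A^2*(b^n)^3 + (-1)*A^2*((a^n)^(n+1))*(b^n)^2 + (3)*A^2*((a^n)^(n+1))^2*(b^n)^4 + (3)*A^2*((a^n)^(n+1))^3*(b^n)^3 + (1)*A^2*(a^n)*((a^n)^(n+1))*(b^n) + (-6)*A^2*(a^n)*((a^n)^(n+1))^2*(b^n)^3 + (-5)*A^2*(a^n)*((a^n)^(n+1))^3*(b^n)^2 + (-1)*A^2*(a^n)*((a^n)^(n+1))^4*(b^n) + (1)*A^2*(a^n)^2*(b^n) + (-1)*A^2*(a^n)^2*((a^n)^(n+1))*(b^n)^3 + (3)*A^2*(a^n)^2*((a^n)^(n+1))^2*(b^n)^2 + (1)*A^2*(a^n)^2*((a^n)^(n+1))^4 + (-1)*A^2*(a^n)^2*((a^n)^(n+1))^4*(b^n)^3 + (1)*A^2*(a^n)^3*((a^n)^(n+1))*(b^n)^2 + (2)*A^2*(a^n)^3*((a^n)^(n+1))^3 + (-2)*A^2*(a^n)^3*((a^n)^(n+1))^3*(b^n)^3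 + (1)*A^2*(a^n)^3*((a^n)^(n+1))^4*(b^n)^2 + (1)*A^2*(a^n)^4*((a^n)^(n+1))^3*(b^n)^2 + (1)*A^2*(a^n)^5*((a^n)^(n+1))^3*(b^n) + (-1)*A^2*C*(b^n)^3 + (-1)*A^2*C*((a^n)^(n+1))*(b^n)^2 + (2)*A^2*C*(a^n)*((a^n)^(n+1))*(b^n) + (1)*A^2*C*(a^n)*((a^n)^(n+1))*(b^n)^4 + (1)*A^2*C*(a^n)*((a^n)^(n+1))^2*(b^n)^3 + (1)*A^2*C*(a^n)^2*(b^n) + (-1)*A^2*C*(a^n)^2*((a^n)^(n+1)) + (-3)*A^2*C*(a^n)^2*((a^n)^(n+1))*(b^n)^3 + (-1)*A^2*C*(a^n)^2*((a^n)^(n+1))^3*(b^n) + (-1)*A^2*C*(a^n)^2*((a^n)^(n+1))^3*(b^n)^4 + (2)*A^2*C*(a^n)^3*((a^n)^(n+1))*(b^n)^2 + (-1)*A^2*C*(a^n)^3*((a^n)^(n+1))^2*(b^n) + (1)*A^2*C*(a^n)^3*((a^n)^(n+1))^3 + (-1)*A^2*C*(a^n)^3*((a^n)^(n+1))^3*(b^n)^3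 + (2)*A^2*C*(a^n)^4*((a^n)^(n+1))^3*(b^n)^2 + (1)*A^2*C^2*(a^n)*((a^n)^(n+1))^2*(b^n)^3 + (-1)*A^2*C^2*(a^n)^3*((a^n)^(n+1))^2*(b^n) + (-1)*A^3*(b^n)^2 + (1)*A^3*((a^n)^(n+1))*(b^n)^4 + (3)*A^3*((a^n)^(n+1))^2*(b^n)^3 + (1)*A^3*(a^n)*(b^n) + (-2)*A^3*(a^n)*((a^n)^(n+1))*(b^n)^3 + (-6)*A^3*(a^n)*((a^n)^(n+1))^2*(b^n)^2 + (-1)*A^3*(a^n)*((a^n)^(n+1))^3*(b^n) + (3)*A^3*(a^n)^2*((a^n)^(n+1))^2*(b^n) + (1)*A^3*(a^n)^2*((a^n)^(n+1))^3 + (-1)*A^3*(a^n)^2*((a^n)^(n+1))^3*(b^n)^3 + (1)*A^3*(a^n)^3*((a^n)^(n+1))*(b^n) + (1)*A^3*(a^n)^4*((a^n)^(n+1))^3*(b^n) + (1)*A^3*C*(a^n)*((a^n)^(n+1))*(b^n)^3 + (1)*A^3*C*(a^n)*((a^n)^(n+1))^2*(b^n)^2 + (-2)*A^3*C*(a^n)^2*((a^n)^(n+1))*(b^n)^2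 + (-1)*A^3*C*(a^n)^2*((a^n)^(n+1))^2*(b^n) + (1)*A^3*C*(a^n)^3*((a^n)^(n+1))*(b^n) + (1)*A^4*((a^n)^(n+1))*(b^n)^3 + (-2)*A^4*(a^n)*((a^n)^(n+1))*(b^n)^2 + (1)*A^4*(a^n)^2*((a^n)^(n+1))*(b^n)) * hC
      have h6 : ((-1)*((a^n)^(n+1)) + (-1)*((a^n)^(n+1))^4 + (-1)*(a^n) + (-4)*(a^n)*((a^n)^(n+1))^3 + (-1)*(a^n)^3*((a^n)^(n+1))^4 + (-1)*(a^n)^4*((a^n)^(n+1))^3 + (1)*C*((a^n)^(n+1)) + (1)*C*((a^n)^(n+1))^4 + (-3)*C*(a^n)^2*((a^n)^(n+1))^2 + (1)*C*(a^n)^3*((a^n)^(n+1))^4 + (-1)*A + (-3)*A*((a^n)^(n+1))^3 + (-6)*A*(a^n)*((a^n)^(n+1))^2 + (-1)*A*(a^n)^2*((a^n)^(n+1)) + (-2)*A*(a^n)^2*((a^n)^(n+1))^4 + (-2)*A*(a^n)^3*((a^n)^(n+1))^3 + (1)*A*C + (2)*A*C*((a^n)^(n+1))^3 + (-1)*A*C*(a^n)^2*((a^n)^(n+1))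 + (1)*A*C*(a^n)^2*((a^n)^(n+1))^4 + (-3)*A^2*((a^n)^(n+1))^2 + (-2)*A^2*(a^n)*((a^n)^(n+1)) + (-1)*A^2*(a^n)*((a^n)^(n+1))^4 + (-3)*A^2*(a^n)^2*((a^n)^(n+1))^3 + (1)*A^2*C*((a^n)^(n+1))^2 + (-1)*A^2*C*(a^n)^3*((a^n)^(n+1))^2 + (-1)*A^3*((a^n)^(n+1)) + (-2)*A^3*(a^n)*((a^n)^(n+1))^3 + (-1)*A^3*(a^n)^2*((a^n)^(n+1))^2 + (-1)*A^3*C*(a^n)^2*((a^n)^(n+1))^2 + (-1)*A^4*(a^n)*((a^n)^(n+1))^2) * (b ^ n - a ^ n) = 0 := by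
        rcases mul_eq_zero.mp main with h | h
        · exact h
        · exact absurd h (hm (b ^ n) hub)
      rcases mul_eq_zero.mp h6 with h7 | h7
      · exfalso
        have h8 : ((a ^ n) ^ (n+1) + C * (a ^ n) + A) * ((-1) + (-1)*((a^n)^(n+1))^3 + (-3)*(a^n)*((a^n)^(n+1))^2 + (-1)*(a^n)^3*((a^n)^(n+1))^3 + (1)*C + (1)*C*((a^n)^(n+1))^3 + (1)*C*(a^n)^3*((a^n)^(n+1))^3 + (-2)*A*((a^n)^(n+1))^2 + (-2)*A*(a^n)*((a^n)^(n+1)) + (-2)*A*(a^n)^2*((a^n)^(n+1))^3 + (1)*A*C*((a^n)^(n+1))^2 + (1)*A*C*(a^n)*((a^n)^(n+1)) + (1)*A*C*(a^n)^2*((a^n)^(n+1))^3 + (-1)*A^2*((a^n)^(n+1)) + (-1)*A^2*(a^n)*((a^n)^(n+1))^3 + (-1)*A^2*(a^n)^2*((a^n)^(n+1))^2 + (-1)*A^3*(a^n)*((a^n)^(n+1))^2) = 0 := by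
          linear_combination h7 - (((-1)*(a^n) + (-1)*(a^n)*((a^n)^(n+1))^3 + (-1)*(a^n)^4*((a^n)^(n+1))^3 + (-1)*A*(a^n)*((a^n)^(n+1))^2 + (-1)*A*(a^n)^2*((a^n)^(n+1)) + (-1)*A*(a^n)^3*((a^n)^(n+1))^3)) * hC
        rcases mul_eq_zero.mp h8 with h9 | h9
        · exact keyN (a ^ n) hua h9
        · exact keyQ (a ^ n) hua h9
      · have hvu : b ^ n = a ^ n := sub_eq_zero.mp h7
        rw [hvu] at eD
        exact mul_right_cancel₀ (keyD (a ^ n) hua) eD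
end

section
/- Let q be a prime power, F = GF(q^3), and A, C ∈ GF(q) with C ≠ 0. If u ∈ F satisfies u^(q^2+q+1) = 1 and u^(q+2) + A·u^(q+1) + C = 0, then u·(u + A)·(C·u³ + A(C+1)·u² + A²·u - C) = 0. -/
theorem stmt_16 (q : ℕ) (hq : IsPrimePow q)
    (F : Type*) [Field F] [Fintype F] (hF : Fintype.card F = q ^ 3)
    (A C : F) (hAq : A ^ q = A) (hCq : C ^ q = C) (hC : C ≠ 0)
    (u : F) (hu : u ^ (q ^ 2 + q + 1) = 1)
    (heq : u ^ (q + 2) + A * u ^ (q + 1) + C = 0) :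
    u * (u + A) * (C * u ^ 3 + A * (C + 1) * u ^ 2 + A ^ 2 * u - C) = 0 := by
  obtain ⟨p, k, hp, hk, rfl⟩ := hq
  have hpp : p.Prime := hp.nat_prime
  haveI : Fact p.Prime := ⟨hpp⟩
  -- characteristic
  set r := ringChar F with hr
  haveI : CharP F r := ringChar.charP F
  obtain ⟨n, hrp, hcard⟩ := FiniteField.card F r
  have hrq : r = p := by
    have h1 : p ∣ r ^ (n : ℕ) := by
      rw [← hcard, hF]
      exact dvd_pow (dvd_pow_self p hk.ne') (by norm_num)
    exact ((Nat.prime_dvd_prime_iff_eq hpp hrp).mp (hpp.dvd_of_dvd_pow h1)).symm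
  haveI hcp : CharP F p := hrq ▸ (ringChar.charP F)
  set q := p ^ k with hqdef
  set φ := iterateFrobenius F p k with hφ
  have hφx : ∀ x : F, φ x = x ^ q := fun x => iterateFrobenius_def p k x
  have hu0 : u ≠ 0 := by
    intro h
    rw [h, zero_pow (by positivity)] at hu
    exact zero_ne_one hu
  have h1 : u ^ q * u * (u + A) = -C := by
    have e1 : u ^ (q + 2) = u ^ q * u * u := by ring
    have e2 : u ^ (q + 1) = u ^ q * u := by ring
    rw [e1, e2] at heq
    linear_combination heq
  have h2 : u ^ (q^2) * u ^ q * (u ^ q + A) = -C := by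
    have := congrArg φ h1
    rw [map_neg, map_mul, map_mul, map_add, hφx, hφx, hφx, hφx, hAq, hCq,
      ← pow_mul, ← pow_two] at this
    exact this
  have h3 : u ^ (q^2) * u ^ q * u = 1 := by
    rw [← hu]; ring
  have h4 : u ^ q + A = -C * u := by
    have := congrArg (· * u) h2
    calc u ^ q + A = (u ^ (q^2) * u ^ q * u) * (u ^ q + A) := by rw [h3]; ring
    _ = -C * u := by linear_combination this
  have h5 : C * u ^ 3 + A * (C + 1) * u ^ 2 + A ^ 2 * u - C = 0 := by
    have huq : u ^ q = -C * u - A := by linear_combination h4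
    rw [huq] at h1
    linear_combination -h1
  rw [h5, mul_zero]
end

section
/- Let q be a prime power, F = GF(q^3), and B, C ∈ GF(q) with C ≠ 0. If u ∈ F satisfies u^(q^2+q+1) = 1 and u^(q+2) + B·u + C = 0, then u²·(B·u + C)·(C·u³ - B²·u² - (BC + B)·u - C) = 0. -/
theorem stmt_17 (q : ℕ) (hq : IsPrimePow q)
    (F : Type*) [Field F] [Fintype F] (hF : Fintype.card F = q ^ 3)
    (B C : F) (hBq : B ^ q = B) (hCq : C ^ q = C) (hC : C ≠ 0)
    (u : F) (hu : u ^ (q ^ 2 + q + 1) = 1)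
    (heq : u ^ (q + 2) + B * u + C = 0) :
    u ^ 2 * (B * u + C) * (C * u ^ 3 - B ^ 2 * u ^ 2 - (B * C + B) * u - C) = 0 := by
  obtain ⟨p, k, hp, hk, rfl⟩ := hq
  have hp' : p.Prime := hp.nat_prime
  haveI : Fact p.Prime := ⟨hp'⟩
  obtain ⟨n, hrp, hcard⟩ := FiniteField.card F (ringChar F)
  have hpr : ringChar F = p := by
    have hdvd : ringChar F ∣ p := by
      apply hrp.dvd_of_dvd_pow (n := 3 * k)
      have : ringChar F ∣ ringChar F ^ (n : ℕ) := dvd_pow_self _ n.ne_zero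
      rw [← hcard, hF, ← pow_mul, mul_comm] at this
      exact this
    exact ((Nat.prime_dvd_prime_iff_eq hrp hp').mp hdvd)
  haveI hcp : CharP F p := hpr ▸ ringChar.charP F
  have hq0 : p ^ k ≠ 0 := pow_ne_zero k hp'.pos.ne'
  set q := p ^ k with hqdef
  have hfrob : ∀ x y : F, (x + y) ^ q = x ^ q + y ^ q := fun x y =>
    add_pow_char_pow x y p k
  have h2 : u ^ ((q + 2) * q) + B * u ^ q + C = 0 := by
    have h := congrArg (· ^ q) heq
    simp only [zero_pow hq0] at h
    rw [hfrob, hfrob, mul_pow, hBq, hCq, ← pow_mul] at h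
    exact h
  have h3 : u ^ q + B * (u ^ q * u) + C * u = 0 := by
    have h := congrArg (· * u) h2
    simp only [zero_mul, add_mul] at h
    rw [← pow_succ] at h
    have he : q * q + 2 * q + 1 = (q ^ 2 + q + 1) + q := by ring
    rw [he, pow_add, hu, one_mul, mul_assoc] at h
    exact h
  have h1 : u ^ q * u ^ 2 + B * u + C = 0 := by
    rw [← pow_add]; exact heq
  linear_combination (u ^ 2 * (B * u + C)) * (u ^ 2 * h3 - (1 + B * u) * h1)
end
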